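/- arXiv:2402.02156 — 6 statements merged into one kernel-verified Lean document; each statement's English description precedes it below -/
import Mathlib

section
/- If θ_k : X_k → Y_k (k = 1, …, n) are domain minimal maps of finite-dimensional A-modules, then their direct sum ⊕θ_k : ⊕X_k → ⊕Y_k is domain minimal. -/
open CategoryTheory

universe u

section Preamble

variable {A : Type u} [Ring A]

/-- Hom_A(X, Y) = 0. -/
def HomZero (X Y : ModuleCat.{u} A) : Prop := ∀ f : X ⟶ Y, f = 0

/-- `0 → X → Y → Z → 0` is a short exact sequence. -/
structure IsSES {X Y Z : ModuleCat.{u} A} (i : X ⟶ Y) (p : Y ⟶ Z) : Prop where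
  inj : Function.Injective i
  surj : Function.Surjective p
  exact : LinearMap.range (i.hom : X →ₗ[A] Y) = LinearMap.ker (p.hom : Y →ₗ[A] Z)

/-- Ext¹_A(M, N) = 0, encoded as: every short exact sequence `0 → N → E → M → 0` splits. -/
def Ext1Vanish (M N : ModuleCat.{u} A) : Prop :=
  ∀ (E : ModuleCat.{u} A) (i : N ⟶ E) (p : E ⟶ M), IsSES i p → ∃ s : M ⟶ E, s ≫ p = 𝟙 M

/-- A torsion theory in the category of finite-dimensional (i.e. finite) A-modules. -/
structure TorsionTheory (A : Type u) [Ring A] : Type (u + 1) where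
  T : ModuleCat.{u} A → Prop
  F : ModuleCat.{u} A → Prop
  T_iso : ∀ {X Y : ModuleCat.{u} A}, (X ≅ Y) → T X → T Y
  F_iso : ∀ {X Y : ModuleCat.{u} A}, (X ≅ Y) → F X → F Y
  T_fin : ∀ X, T X → Module.Finite A X
  F_fin : ∀ X, F X → Module.Finite A X
  hom_zero : ∀ X Y, T X → F Y → HomZero X Y
  ses : ∀ (X : ModuleCat.{u} A), Module.Finite A X →
    ∃ t : Submodule A X, T (ModuleCat.of A t) ∧ F (ModuleCat.of A (X ⧸ t))

def ClosedUnderQuotients (C : ModuleCat.{u} A → Prop) : Prop :=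
  ∀ (X : ModuleCat.{u} A), C X → ∀ N : Submodule A X, C (ModuleCat.of A (X ⧸ N))

def ClosedUnderSubmodules (C : ModuleCat.{u} A → Prop) : Prop :=
  ∀ (X : ModuleCat.{u} A), C X → ∀ N : Submodule A X, C (ModuleCat.of A N)

def ClosedUnderExtensions (C : ModuleCat.{u} A → Prop) : Prop :=
  ∀ {X Y Z : ModuleCat.{u} A} (i : X ⟶ Y) (p : Y ⟶ Z), IsSES i p → C X → C Z → C Y

/-- A map of modules is domain minimal (right minimal). -/
def DomainMinimal {X Y : Type u} [AddCommGroup X] [Module A X]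
    [AddCommGroup Y] [Module A Y] (f : X →ₗ[A] Y) : Prop :=
  ∀ β : X →ₗ[A] X, f ∘ₗ β = f → Function.Bijective β

/-- `θ : X ⟶ Cx` is a `C`-preenvelope of `X`. -/
def IsPreenvelope (C : ModuleCat.{u} A → Prop) {X Cx : ModuleCat.{u} A} (θ : X ⟶ Cx) : Prop :=
  C Cx ∧ ∀ (C' : ModuleCat.{u} A), C C' → ∀ f : X ⟶ C', ∃ g : Cx ⟶ C', θ ≫ g = f

/-- A `C`-envelope: a codomain minimal `C`-preenvelope. -/
def IsEnvelope (C : ModuleCat.{u} A → Prop) {X Cx : ModuleCat.{u} A} (θ : X ⟶ Cx) : Prop :=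
  IsPreenvelope C θ ∧ ∀ α : Cx ⟶ Cx, θ ≫ α = θ → Function.Bijective α

/-- `θ : Cx ⟶ X` is a `C`-precover of `X`. -/
def IsPrecover (C : ModuleCat.{u} A → Prop) {X Cx : ModuleCat.{u} A} (θ : Cx ⟶ X) : Prop :=
  C Cx ∧ ∀ (C' : ModuleCat.{u} A), C C' → ∀ f : C' ⟶ X, ∃ g : C' ⟶ Cx, g ≫ θ = f

/-- A `C`-cover: a domain minimal `C`-precover. -/
def IsCover (C : ModuleCat.{u} A → Prop) {X Cx : ModuleCat.{u} A} (θ : Cx ⟶ X) : Prop :=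
  IsPrecover C θ ∧ ∀ β : Cx ⟶ Cx, β ≫ θ = θ → Function.Bijective β

/-- `Gen M`: the class of quotients of finite direct sums of copies of `M`. -/
def GenClass (M X : ModuleCat.{u} A) : Prop :=
  ∃ (n : ℕ) (p : ModuleCat.of A (Fin n → M) ⟶ X), Function.Surjective p

/-- `add M`: direct summands of finite direct sums of copies of `M`. -/
def AddClass (M X : ModuleCat.{u} A) : Prop :=
  ∃ (n : ℕ) (s : X ⟶ ModuleCat.of A (Fin n → M)) (r : ModuleCat.of A (Fin n → M) ⟶ X),
    s ≫ r = 𝟙 X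

/-- A map factors through an injective module. -/
def FactorsThroughInjective {X Y : ModuleCat.{u} A} (f : X ⟶ Y) : Prop :=
  ∃ (I : ModuleCat.{u} A), CategoryTheory.Injective I ∧ ∃ (g : X ⟶ I) (h : I ⟶ Y), g ≫ h = f

/-- A map factors through a projective module. -/
def FactorsThroughProjective {X Y : ModuleCat.{u} A} (f : X ⟶ Y) : Prop :=
  ∃ (P : ModuleCat.{u} A), CategoryTheory.Projective P ∧ ∃ (g : X ⟶ P) (h : P ⟶ Y), g ≫ h = f

/-- proj.dim M ≤ 1: there is a projective resolution `0 → P₁ → P₀ → M → 0`. -/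
def ProjDimLE1 (M : ModuleCat.{u} A) : Prop :=
  ∃ (P₁ P₀ : ModuleCat.{u} A) (i : P₁ ⟶ P₀) (p : P₀ ⟶ M),
    CategoryTheory.Projective P₁ ∧ CategoryTheory.Projective P₀ ∧ IsSES i p

end Preamble

section Aux

variable {A : Type u} [Ring A]

/-- Domain minimality transports along compatible isomorphisms. -/
private lemma conj_min {X X' Y Y' : Type u}
    [AddCommGroup X] [Module A X] [AddCommGroup X'] [Module A X']
    [AddCommGroup Y] [Module A Y] [AddCommGroup Y'] [Module A Y']
    (eX : X ≃ₗ[A] X') (eY : Y ≃ₗ[A] Y') (f : X →ₗ[A] Y) (f' : X' →ₗ[A] Y')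
    (hcomm : ∀ x, f' (eX x) = eY (f x)) (h : DomainMinimal f') :
    DomainMinimal f := by
  intro β hβ
  have hγ : f' ∘ₗ ((eX : X →ₗ[A] X') ∘ₗ β ∘ₗ (eX.symm : X' →ₗ[A] X)) = f' := by
    ext x'
    simp only [LinearMap.coe_comp, Function.comp_apply, LinearEquiv.coe_coe]
    have h1 : f (β (eX.symm x')) = f (eX.symm x') := by
      simpa using LinearMap.congr_fun hβ (eX.symm x')
    rw [hcomm, h1, ← hcomm, eX.apply_symm_apply]
  have hb := h _ hγ
  have key : (β : X → X) =
      (eX.symm : X' → X) ∘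
        (((eX : X →ₗ[A] X') ∘ₗ β ∘ₗ (eX.symm : X' →ₗ[A] X)) : X' → X') ∘ (eX : X → X') := by
    funext x; simp
  rw [key]
  exact (eX.symm.bijective.comp hb).comp eX.bijective

/-- The product of two domain minimal maps is domain minimal. -/
private lemma prod_min {X X' Y Y' : Type u}
    [AddCommGroup X] [Module A X] [AddCommGroup X'] [Module A X']
    [AddCommGroup Y] [Module A Y] [AddCommGroup Y'] [Module A Y']
    (f : X →ₗ[A] Y) (g : X' →ₗ[A] Y')
    (hf : DomainMinimal f) (hg : DomainMinimal g) :
    DomainMinimal (f.prodMap g) := by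
  intro β hβ
  have hcomp : ∀ p : X × X', f (β p).1 = f p.1 ∧ g (β p).2 = g p.2 := by
    intro p
    have := LinearMap.congr_fun hβ p
    simpa [Prod.ext_iff] using this
  set a : X →ₗ[A] X := (LinearMap.fst A X X') ∘ₗ β ∘ₗ LinearMap.inl A X X' with ha_def
  set b : X' →ₗ[A] X := (LinearMap.fst A X X') ∘ₗ β ∘ₗ LinearMap.inr A X X' with hb_def
  set c : X →ₗ[A] X' := (LinearMap.snd A X X') ∘ₗ β ∘ₗ LinearMap.inl A X X' with hc_def
  set d : X' →ₗ[A] X' := (LinearMap.snd A X X') ∘ₗ β ∘ₗ LinearMap.inr A X X' with hd_def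
  have hfa : f ∘ₗ a = f := by
    ext x; have := (hcomp (x, 0)).1; simpa [ha_def] using this
  have hgc : ∀ x, g (c x) = 0 := by
    intro x; have := (hcomp (x, 0)).2; simpa [hc_def] using this
  have hgd : ∀ x', g (d x') = g x' := by
    intro x'; have := (hcomp (0, x')).2; simpa [hd_def] using this
  have hab : Function.Bijective a := hf a hfa
  set ea := LinearEquiv.ofBijective a hab with hea
  set d₂ : X' →ₗ[A] X' := d - c ∘ₗ (ea.symm : X →ₗ[A] X) ∘ₗ b with hd2
  have hgd₂ : g ∘ₗ d₂ = g := by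
    ext x'
    simp [hd2, hgc, hgd]
  have hdb : Function.Bijective d₂ := hg d₂ hgd₂
  set ed := LinearEquiv.ofBijective d₂ hdb with hed
  have hβ1 : ∀ x x', (β (x, x')).1 = a x + b x' := by
    intro x x'
    have hsplit : (x, x') = (x, 0) + ((0 : X), x') := by simp
    rw [hsplit, map_add]; rfl
  have hβ2 : ∀ x x', (β (x, x')).2 = c x + d x' := by
    intro x x'
    have hsplit : (x, x') = (x, 0) + ((0 : X), x') := by simp
    rw [hsplit, map_add]; rfl
  have hea_app : ∀ x, ea x = a x := fun x => rfl
  constructor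
  · rw [← LinearMap.ker_eq_bot, LinearMap.ker_eq_bot']
    rintro ⟨x, x'⟩ h0
    have h1 : a x + b x' = 0 := by rw [← hβ1, h0]; rfl
    have h2 : c x + d x' = 0 := by rw [← hβ2, h0]; rfl
    have hax : a x = -(b x') := by rwa [← eq_neg_iff_add_eq_zero] at h1
    have hx : x = ea.symm (-(b x')) := by
      rw [← hax, ← hea_app, ea.symm_apply_apply]
    have hd2x : d₂ x' = 0 := by
      have : d₂ x' = c x + d x' := by
        simp only [hd2, LinearMap.sub_apply, LinearMap.coe_comp, Function.comp_apply,
          LinearEquiv.coe_coe, hx, map_neg]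
        abel
      rw [this, h2]
    have hx'0 : x' = 0 := hdb.injective (by simpa using hd2x)
    subst hx'0
    have hx0 : x = 0 := by simpa using hx
    simp [hx0]
  · rintro ⟨u, v⟩
    refine ⟨(ea.symm (u - b (ed.symm (v - c (ea.symm u)))), ed.symm (v - c (ea.symm u))), ?_⟩
    set x' : X' := ed.symm (v - c (ea.symm u)) with hx'
    set x : X := ea.symm (u - b x') with hx
    have hax : a x = u - b x' := by
      have := ea.apply_symm_apply (u - b x'); rwa [hea_app] at this
    have hdx : d₂ x' = v - c (ea.symm u) := ed.apply_symm_apply _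
    have hdd : d x' = d₂ x' + c (ea.symm (b x')) := by
      simp [hd2]
    rw [Prod.ext_iff]
    constructor
    · rw [hβ1, hax]; abel
    · rw [hβ2, hdd, hdx]
      have hcx : c x = c (ea.symm u) - c (ea.symm (b x')) := by
        rw [hx, ← map_sub, ← map_sub]
      rw [hcx]; abel

/-- Splitting off the first coordinate of a finite product of modules. -/
private def consLEquiv {n : ℕ} (X : Fin (n + 1) → Type u)
    [∀ k, AddCommGroup (X k)] [∀ k, Module A (X k)] :
    (∀ k, X k) ≃ₗ[A] X 0 × ∀ k : Fin n, X k.succ where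
  toFun f := (f 0, fun k => f k.succ)
  invFun p := Fin.cons p.1 p.2
  map_add' _ _ := rfl
  map_smul' _ _ := rfl
  left_inv f := by
    funext k
    refine Fin.cases ?_ ?_ k <;> simp
  right_inv p := by
    refine Prod.ext ?_ ?_
    · simp
    · funext k; simp

private lemma key (n : ℕ) :
    ∀ (X Y : Fin n → Type u)
      [∀ k, AddCommGroup (X k)] [∀ k, Module A (X k)]
      [∀ k, AddCommGroup (Y k)] [∀ k, Module A (Y k)]
      (θ : ∀ k, X k →ₗ[A] Y k), (∀ k, DomainMinimal (θ k)) →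
      DomainMinimal (LinearMap.pi fun k => (θ k) ∘ₗ LinearMap.proj k) := by
  induction n with
  | zero =>
    intro X Y _ _ _ _ θ _ β _
    haveI : Subsingleton (∀ k : Fin 0, X k) := ⟨fun a b => funext fun i => i.elim0⟩
    exact ⟨fun _ _ _ => Subsingleton.elim _ _, fun y => ⟨y, Subsingleton.elim _ _⟩⟩
  | succ n ih =>
    intro X Y _ _ _ _ θ h
    exact conj_min (consLEquiv X) (consLEquiv Y) _
      ((θ 0).prodMap (LinearMap.pi fun k : Fin n => (θ k.succ) ∘ₗ LinearMap.proj k))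
      (fun x => rfl)
      (prod_min _ _ (h 0)
        (ih (fun k => X k.succ) (fun k => Y k.succ) (fun k => θ k.succ) (fun k => h k.succ)))

end Aux

section Statements

variable (K : Type u) [Field K] (A : Type u) [Ring A] [Algebra K A] [FiniteDimensional K A]

/-- A finite direct sum of domain minimal maps is domain minimal. -/
theorem domainMinimal_directSum {n : ℕ} {X Y : Fin n → Type u}
    [∀ k, AddCommGroup (X k)] [∀ k, Module A (X k)] [∀ k, Module.Finite A (X k)]
    [∀ k, AddCommGroup (Y k)] [∀ k, Module A (Y k)] [∀ k, Module.Finite A (Y k)]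
    (θ : ∀ k, X k →ₗ[A] Y k) (h : ∀ k, DomainMinimal (θ k)) :
    DomainMinimal (LinearMap.pi fun k => (θ k) ∘ₗ LinearMap.proj k) := by
  exact key n X Y θ h

end Statements
end

section
/- Let M be a finite-dimensional A-module with Ext¹_A(M, X) = 0 for all X ∈ Gen M. Then Gen M is a torsion class, i.e. closed under quotients and extensions. -/
open CategoryTheory

universe u

section Statements

variable (K : Type u) [Field K] (A : Type u) [Ring A] [Algebra K A] [FiniteDimensional K A]

/-- If `Ext¹_A(M, X) = 0` for all `X ∈ Gen M`, then `Gen M` is a torsion class,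
i.e. closed under quotients and extensions. -/
theorem genClass_torsionClass_of_ext_vanish (M : ModuleCat.{u} A) [Module.Finite A M]
    (h : ∀ X : ModuleCat.{u} A, GenClass M X → Ext1Vanish M X) :
    ClosedUnderQuotients (GenClass M) ∧ ClosedUnderExtensions (GenClass M) := by
  constructor
  · rintro X ⟨n, p, hp⟩ N
    exact ⟨n, ModuleCat.ofHom (N.mkQ ∘ₗ p.hom),
      (Submodule.mkQ_surjective N).comp hp⟩
  · rintro X Y Z i p hses hX hZ
    obtain ⟨n, q, hq⟩ := hZ
    obtain ⟨k, r, hr⟩ := hX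
    have pi_zero : ∀ x : X, p (i x) = 0 := by
      intro x
      have : i x ∈ LinearMap.ker p.hom := by
        rw [← hses.exact]; exact ⟨x, rfl⟩
      exact this
    -- lift each q ∘ (single j) : M → Z through p
    have key : ∀ j : Fin n, ∃ ℓ : M →ₗ[A] Y,
        ∀ m : M, p (ℓ m) = q (Pi.single j m) := by
      intro j
      set qj : M →ₗ[A] Z := q.hom ∘ₗ
        LinearMap.single A (fun _ : Fin n => M) j with hqj
      set E : Submodule A (Y × M) := LinearMap.ker
        (p.hom ∘ₗ LinearMap.fst A Y M - qj ∘ₗ LinearMap.snd A Y M) with hE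
      have memE : ∀ v : Y × M, v ∈ E ↔ p v.1 = qj v.2 := by
        intro v
        simp only [hE, LinearMap.mem_ker, LinearMap.sub_apply, LinearMap.comp_apply,
          LinearMap.fst_apply, LinearMap.snd_apply, sub_eq_zero]
      have hmem : ∀ x : X, ((i x, 0) : Y × M) ∈ E := by
        intro x
        rw [memE]
        simp [pi_zero x]
      set i' : X ⟶ ModuleCat.of A E := ModuleCat.ofHom
        (LinearMap.codRestrict E ((LinearMap.inl A Y M) ∘ₗ i.hom) hmem) with hi'
      set p' : ModuleCat.of A E ⟶ M := ModuleCat.ofHom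
        ((LinearMap.snd A Y M) ∘ₗ E.subtype) with hp'
      have hses' : IsSES i' p' := by
        refine ⟨?_, ?_, ?_⟩
        · intro a b hab
          apply hses.inj
          have := congrArg (fun e : E => (e : Y × M).1) hab
          exact this
        · intro m
          obtain ⟨y, hy⟩ := hses.surj (qj m)
          exact ⟨⟨(y, m), (memE (y, m)).mpr hy⟩, rfl⟩
        · apply le_antisymm
          · rintro e ⟨x, rfl⟩
            show ((LinearMap.snd A Y M) ∘ₗ E.subtype) _ = 0
            rfl
          · rintro ⟨⟨y, m⟩, hym⟩ hk
            have hm : m = 0 := hk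
            subst hm
            have hy : p y = 0 := by
              have := (memE (y, 0)).mp hym
              simpa using this
            have : y ∈ LinearMap.range i.hom := by
              rw [hses.exact]; exact hy
            obtain ⟨x, hx⟩ := this
            refine ⟨x, ?_⟩
            apply Subtype.ext
            show ((i x, 0) : Y × M) = (y, 0)
            rw [hx]
      obtain ⟨s, hs⟩ := h X ⟨k, r, hr⟩ (ModuleCat.of A E) i' p' hses'
      refine ⟨(LinearMap.fst A Y M) ∘ₗ E.subtype ∘ₗ s.hom, ?_⟩
      intro m
      set e : E := (s m : E) with he
      have hsm : (e : Y × M).2 = m := by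
        have := congrFun (congrArg (fun f : M ⟶ M => (f : M → M)) hs) m
        simpa [hp'] using this
      have := (memE (e : Y × M)).mp e.2
      simpa [hsm, hqj] using this
    choose ℓ hℓ using key
    set s' : (Fin n → M) →ₗ[A] Y := ∑ j : Fin n, (ℓ j) ∘ₗ LinearMap.proj j with hs'
    have hps' : ∀ v : Fin n → M, p (s' v) = q v := by
      intro v
      rw [hs']
      simp only [LinearMap.coe_sum, Finset.sum_apply, LinearMap.coe_comp,
        Function.comp_apply, LinearMap.proj_apply, map_sum]
      rw [Finset.sum_congr rfl (fun j _ => hℓ j (v j)), ← map_sum]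
      congr 1
      exact Finset.univ_sum_single v
    refine ⟨n + k, ModuleCat.ofHom
      (s' ∘ₗ LinearMap.funLeft A M (Fin.castAdd k) +
        i.hom ∘ₗ r.hom ∘ₗ
          LinearMap.funLeft A M (Fin.natAdd n)), ?_⟩
    intro y
    obtain ⟨v, hv⟩ := hq (p y)
    have : y - s' v ∈ LinearMap.range i.hom := by
      rw [hses.exact]
      show p (y - s' v) = 0
      rw [map_sub, hps', hv, sub_self]
    obtain ⟨x, hx⟩ := this
    obtain ⟨w, hw⟩ := hr x
    refine ⟨Fin.append v w, ?_⟩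
    show s' ((Fin.append v w) ∘ Fin.castAdd k) + i (r ((Fin.append v w) ∘ Fin.natAdd n)) = y
    have h1 : (Fin.append v w) ∘ Fin.castAdd k = v := by
      funext j; simp [Fin.append_left]
    have h2 : (Fin.append v w) ∘ Fin.natAdd n = w := by
      funext j; simp [Fin.append_right]
    rw [h1, h2, hw, hx]
    abel

end Statements
end

section
/- (Auslander–Smalø Lemma) For finite-dimensional A-modules M and N, the following are equivalent: (1) Hom_A(N, τM) = 0; (2) Ext¹_A(M, N') = 0 for every N' ∈ Gen N. -/
open CategoryTheory

universe u

section AuxLemmas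

variable {A : Type u} [Ring A]

lemma punit_injective : CategoryTheory.Injective (ModuleCat.of A PUnit.{u+1}) := by
  constructor
  intro X Y g f hf
  exact ⟨0, ModuleCat.hom_ext (LinearMap.ext fun x => Subsingleton.elim _ _)⟩

lemma injective_of_retract' {I J : ModuleCat.{u} A}
    (hI : CategoryTheory.Injective I) (a : J ⟶ I) (r : I ⟶ J) (h : a ≫ r = 𝟙 J) :
    CategoryTheory.Injective J := by
  constructor
  intro X Y g f hf
  obtain ⟨h', hh'⟩ := hI.factors (g ≫ a) f
  exact ⟨h' ≫ r, by rw [← Category.assoc, hh', Category.assoc, h, Category.comp_id]⟩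

lemma extend_injective {I : ModuleCat.{u} A} (hI : CategoryTheory.Injective I)
    {X Y : Type u} [AddCommGroup X] [Module A X] [AddCommGroup Y] [Module A Y]
    (j : X →ₗ[A] Y) (hj : Function.Injective j) (f : X →ₗ[A] ↑I) :
    ∃ h : Y →ₗ[A] ↑I, h ∘ₗ j = f := by
  haveI := hI
  let jh : ModuleCat.of A X ⟶ ModuleCat.of A Y := ModuleCat.ofHom j
  haveI : Mono jh := (ModuleCat.mono_iff_injective jh).mpr hj
  exact ⟨(CategoryTheory.Injective.factorThru (ModuleCat.ofHom f : ModuleCat.of A X ⟶ I) jh).hom,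
    congrArg ModuleCat.Hom.hom
      (CategoryTheory.Injective.comp_factorThru (ModuleCat.ofHom f : ModuleCat.of A X ⟶ I) jh)⟩

/-- `P` is an essential submodule of `Q` (elementwise formulation). -/
def EssIn {X : Type u} [AddCommGroup X] [Module A X] (P Q : Submodule A X) : Prop :=
  ∀ x ∈ Q, x ≠ 0 → ∃ a : A, a • x ∈ P ∧ a • x ≠ 0

/-- Key lemma (injective hull argument): if `gS` is a submodule of an injective `I`,
`hm : I → τM`, `k : τM → I` are maps such that `k ∘ hm` fixes `gS` pointwise, and `τM`
has no nonzero injective retract, then `gS = ⊥`. -/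
lemma key_retract {τM I : ModuleCat.{u} A} (hI : CategoryTheory.Injective I)
    (hmL : ↑I →ₗ[A] ↑τM) (kL : ↑τM →ₗ[A] ↑I) (gS : Submodule A ↑I)
    (hfix : ∀ x ∈ gS, kL (hmL x) = x)
    (hnoinj : ∀ (E : ModuleCat.{u} A), CategoryTheory.Injective E →
      ∀ (s : E ⟶ τM) (r : τM ⟶ E), s ≫ r = 𝟙 E → Limits.IsZero E) :
    gS = ⊥ := by
  classical
  -- Zorn 1 : a maximal essential extension `E` of `gS` inside `I`
  obtain ⟨E, hgSE, hEess, hEmax⟩ : ∃ E : Submodule A ↑I, gS ≤ E ∧ EssIn gS E ∧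
      ∀ T : Submodule A ↑I, gS ≤ T ∧ EssIn gS T → E ≤ T → T ≤ E := by
    obtain ⟨E, _, hmax⟩ := zorn_le_nonempty₀ {T : Submodule A ↑I | gS ≤ T ∧ EssIn gS T}
      (fun c hc hchain y hy => by
        refine ⟨sSup c, ⟨le_trans (hc hy).1 (le_sSup hy), ?_⟩, fun z hz => le_sSup hz⟩
        intro x hx hx0
        obtain ⟨T, hT, hxT⟩ := (Submodule.mem_sSup_of_directed ⟨y, hy⟩ hchain.directedOn).1 hx
        exact (hc hT).2 x hxT hx0)
      gS ⟨le_rfl, fun x hmem hx => ⟨1, by rw [one_smul]; exact ⟨hmem, hx⟩⟩⟩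
    exact ⟨E, hmax.1.1, hmax.1.2, fun T hT hET => hmax.2 hT hET⟩
  -- Zorn 2 : a maximal complement `C` of `E` inside `I`
  obtain ⟨C, hCbot, hCmax⟩ : ∃ C : Submodule A ↑I, C ⊓ E = ⊥ ∧
      ∀ C' : Submodule A ↑I, C' ⊓ E = ⊥ → C ≤ C' → C' ≤ C := by
    obtain ⟨C, _, hmax⟩ := zorn_le_nonempty₀ {C : Submodule A ↑I | C ⊓ E = ⊥}
      (fun c hc hchain y hy => by
        refine ⟨sSup c, ?_, fun z hz => le_sSup hz⟩
        show sSup c ⊓ E = ⊥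
        rw [eq_bot_iff]
        intro x hx
        obtain ⟨hx1, hx2⟩ := Submodule.mem_inf.mp hx
        obtain ⟨T, hT, hxT⟩ := (Submodule.mem_sSup_of_directed ⟨y, hy⟩ hchain.directedOn).1 hx1
        have hTmem : T ⊓ E = ⊥ := hc hT
        exact hTmem ▸ Submodule.mem_inf.mpr ⟨hxT, hx2⟩)
      ⊥ (by simp)
    exact ⟨C, hmax.1, fun C' h h' => hmax.2 h h'⟩
  -- the quotient map by `C`
  set π : ↑I →ₗ[A] (↑I ⧸ C) := C.mkQ with hπdef
  have hπ0 : ∀ x : ↑I, π x = 0 ↔ x ∈ C := fun x => Submodule.Quotient.mk_eq_zero C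
  have hπE : ∀ x ∈ E, π x = 0 → x = 0 := by
    intro x hx h0
    have hmem : x ∈ C ⊓ E := Submodule.mem_inf.mpr ⟨(hπ0 x).mp h0, hx⟩
    rw [hCbot] at hmem
    simpa using hmem
  set P' : Submodule A (↑I ⧸ C) := Submodule.map π E with hP'def
  -- `P'` is essential in `I ⧸ C`, by maximality of `C`
  have hess : ∀ z : ↑I ⧸ C, z ≠ 0 → ∃ a : A, a • z ∈ P' ∧ a • z ≠ 0 := by
    intro z hz
    obtain ⟨x, rfl⟩ := C.mkQ_surjective z
    have hxC : x ∉ C := fun hxc => hz ((hπ0 x).mpr hxc)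
    have hne : (C ⊔ Submodule.span A {x}) ⊓ E ≠ ⊥ := by
      intro hbot
      exact hxC (hCmax _ hbot le_sup_left
        (Submodule.mem_sup_right (Submodule.mem_span_singleton_self x)))
    obtain ⟨e, heCE, hene⟩ : ∃ e, e ∈ (C ⊔ Submodule.span A {x}) ⊓ E ∧ e ≠ 0 := by
      by_contra hcon
      push_neg at hcon
      exact hne (eq_bot_iff.mpr fun e he => (Submodule.mem_bot A).mpr (hcon e he))
    obtain ⟨heC, heE⟩ := Submodule.mem_inf.mp heCE
    obtain ⟨c, hc, s, hs, hcs⟩ := Submodule.mem_sup.mp heC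
    obtain ⟨a, rfl⟩ := Submodule.mem_span_singleton.mp hs
    have hπe : π e ≠ 0 := fun h0 => hene (hπE e heE h0)
    have hπeq : a • π x = π e := by
      rw [← map_smul, ← hcs, map_add, (hπ0 c).mpr hc, zero_add]
    exact ⟨a, hπeq ▸ Submodule.mem_map_of_mem heE, hπeq ▸ hπe⟩
  -- `π` restricted to `E` is an isomorphism onto `P'`
  have hpEmem : ∀ c : ↥E, (π ∘ₗ E.subtype) c ∈ P' := fun c => Submodule.mem_map_of_mem c.2
  set pE : ↥E →ₗ[A] ↥P' := LinearMap.codRestrict P' (π ∘ₗ E.subtype) hpEmem with hpEdef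
  have hpEbij : Function.Bijective pE := by
    constructor
    · refine (injective_iff_map_eq_zero pE).mpr fun x hx => ?_
      have hx' : π ↑x = 0 := congrArg Subtype.val hx
      exact Subtype.ext (hπE ↑x x.2 hx')
    · rintro ⟨z, hz⟩
      obtain ⟨x, hxE, hπx⟩ := hz
      exact ⟨⟨x, hxE⟩, Subtype.ext hπx⟩
  set e2 : ↥E ≃ₗ[A] ↥P' := LinearEquiv.ofBijective pE hpEbij with he2def
  -- extend `E.subtype ∘ e2.symm : P' → I` to `v : I ⧸ C → I`
  obtain ⟨v, hv⟩ := extend_injective hI P'.subtype P'.injective_subtype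
    (E.subtype ∘ₗ (e2.symm : ↥P' →ₗ[A] ↥E))
  have hvπE : ∀ x ∈ E, v (π x) = x := by
    intro x hx
    have hmem : π x ∈ P' := Submodule.mem_map_of_mem hx
    have h1 : v (π x) = E.subtype (e2.symm ⟨π x, hmem⟩) := LinearMap.congr_fun hv ⟨π x, hmem⟩
    have h2 : e2 ⟨x, hx⟩ = ⟨π x, hmem⟩ := Subtype.ext rfl
    rw [h1, ← h2, e2.symm_apply_apply]
    rfl
  -- `p := v ∘ π` fixes `E` pointwise and has range `E` (by maximality of `E`)
  set p : ↑I →ₗ[A] ↑I := v ∘ₗ π with hpdef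
  have hpE : ∀ x ∈ E, p x = x := fun x hx => hvπE x hx
  have hrange : LinearMap.range p ≤ E := by
    refine hEmax _ ⟨le_trans hgSE fun x hx => ⟨x, hpE x hx⟩, ?_⟩
      (fun x hx => ⟨x, hpE x hx⟩)
    rintro x ⟨y, rfl⟩ hx0
    have hπy : π y ≠ 0 := by
      intro h0
      exact hx0 (by show v (π y) = 0; rw [h0, map_zero])
    obtain ⟨a, haP, hane⟩ := hess (π y) hπy
    obtain ⟨e, heE, hπe⟩ := haP
    have hee : a • p y = e := by
      show a • v (π y) = e
      rw [← map_smul, ← hπe, hvπE e heE]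
    have hene : e ≠ 0 := by
      intro h0
      rw [h0, map_zero] at hπe
      exact hane hπe.symm
    obtain ⟨b, hbg, hbne⟩ := hEess e heE hene
    refine ⟨b * a, ?_, ?_⟩
    · rw [mul_smul, hee]; exact hbg
    · rw [mul_smul, hee]; exact hbne
  -- hence `E` is a retract of `I`, so `E` is injective
  set rI : ↑I →ₗ[A] ↥E := LinearMap.codRestrict E p (fun c => hrange ⟨c, rfl⟩) with hrIdef
  have hrIE : ∀ x : ↥E, rI ↑x = x := fun x => Subtype.ext (hpE ↑x x.2)
  have hEinj : CategoryTheory.Injective (ModuleCat.of A ↥E) :=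
    injective_of_retract' hI (ModuleCat.ofHom E.subtype : ModuleCat.of A ↥E ⟶ I)
      (ModuleCat.ofHom rI : I ⟶ ModuleCat.of A ↥E) (ModuleCat.hom_ext (LinearMap.ext fun x => hrIE x))
  -- the endomorphism `w` of `E`
  set w : ↥E →ₗ[A] ↥E := rI ∘ₗ kL ∘ₗ hmL ∘ₗ E.subtype with hwdef
  have hwfix : ∀ (x : ↥E), (x : ↑I) ∈ gS → w x = x := by
    intro x hx
    show rI (kL (hmL ↑x)) = x
    rw [hfix ↑x hx]
    exact hrIE x
  have hwinj : Function.Injective w := by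
    refine (injective_iff_map_eq_zero w).mpr fun x hx0 => ?_
    by_contra hne
    have hxne : (x : ↑I) ≠ 0 := fun h => hne (Subtype.ext h)
    obtain ⟨a, hag, hane⟩ := hEess ↑x x.2 hxne
    have hmem : ((a • x : ↥E) : ↑I) ∈ gS := hag
    have hfa : w (a • x) = a • x := hwfix _ hmem
    rw [map_smul, hx0, smul_zero] at hfa
    exact hane (congrArg Subtype.val hfa.symm)
  -- `w` is surjective: its range is an injective essential submodule of `E`
  have hwsurj : Function.Surjective w := by
    set W : Submodule A ↥E := LinearMap.range w with hWdef
    have hWfull : ∀ x : ↥E, x ∈ W := by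
      set eW : ↥E ≃ₗ[A] ↥W := LinearEquiv.ofInjective w hwinj with heWdef
      have hWinj : CategoryTheory.Injective (ModuleCat.of A ↥W) :=
        injective_of_retract' hEinj
          (ModuleCat.ofHom (eW.symm : ↥W →ₗ[A] ↥E) : ModuleCat.of A ↥W ⟶ ModuleCat.of A ↥E)
          (ModuleCat.ofHom (eW : ↥E →ₗ[A] ↥W) : ModuleCat.of A ↥E ⟶ ModuleCat.of A ↥W)
          (ModuleCat.hom_ext (LinearMap.ext fun y => eW.apply_symm_apply y))
      obtain ⟨t, ht⟩ := extend_injective hWinj W.subtype W.injective_subtype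
        (LinearMap.id : ↥W →ₗ[A] ↥W)
      have htinj : ∀ u : ↥E, t u = 0 → u = 0 := by
        intro u hu
        by_contra hne
        have hune : (u : ↑I) ≠ 0 := fun h => hne (Subtype.ext h)
        obtain ⟨a, hag, hane⟩ := hEess ↑u u.2 hune
        have hmemg : ((a • u : ↥E) : ↑I) ∈ gS := hag
        have hWmem : (a • u : ↥E) ∈ W := ⟨a • u, hwfix _ hmemg⟩
        have h1 : t (a • u) = 0 := by rw [map_smul, hu, smul_zero]
        have h2 : t (W.subtype ⟨a • u, hWmem⟩) = ⟨a • u, hWmem⟩ := LinearMap.congr_fun ht _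
        rw [show W.subtype ⟨a • u, hWmem⟩ = a • u from rfl, h1] at h2
        have h3 : (a • u : ↥E) = 0 := congrArg Subtype.val h2.symm
        exact hane (congrArg Subtype.val h3)
      intro x
      have h3 : t (x - W.subtype (t x)) = 0 := by
        have h5 : t (W.subtype (t x)) = t x := LinearMap.congr_fun ht (t x)
        rw [map_sub, h5, sub_self]
      have h4 : x = W.subtype (t x) := by
        have := htinj _ h3
        rwa [sub_eq_zero] at this
      rw [h4]
      exact (t x).2
    intro y
    exact hWfull y
  -- `E` is an injective retract of `τM`, hence zero
  set e3 : ↥E ≃ₗ[A] ↥E := LinearEquiv.ofBijective w ⟨hwinj, hwsurj⟩ with he3def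
  set sE : ↥E →ₗ[A] ↑τM := hmL ∘ₗ E.subtype with hsEdef
  set rE : ↑τM →ₗ[A] ↥E := (e3.symm : ↥E →ₗ[A] ↥E) ∘ₗ rI ∘ₗ kL with hrEdef
  have hsr : (ModuleCat.ofHom sE : ModuleCat.of A ↥E ⟶ τM) ≫ (ModuleCat.ofHom rE : τM ⟶ ModuleCat.of A ↥E) =
      𝟙 (ModuleCat.of A ↥E) := by
    refine ModuleCat.hom_ext (LinearMap.ext fun (x : ↥E) => ?_)
    show e3.symm (rI (kL (hmL ↑x))) = x
    rw [show rI (kL (hmL ↑x)) = w x from rfl, show w x = e3 x from rfl]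
    exact e3.symm_apply_apply x
  have hz := hnoinj (ModuleCat.of A ↥E) hEinj _ _ hsr
  have hid : 𝟙 (ModuleCat.of A ↥E) = 0 := hz.eq_of_src _ _
  rw [eq_bot_iff]
  intro x hx
  have hx0 : (⟨x, hgSE hx⟩ : ↥E) = 0 := LinearMap.congr_fun (congrArg ModuleCat.Hom.hom hid) ⟨x, hgSE hx⟩
  exact (Submodule.mem_bot A).mpr (congrArg Subtype.val hx0)

end AuxLemmas

section Statements

variable (K : Type u) [Field K] (A : Type u) [Ring A] [Algebra K A] [FiniteDimensional K A]

/-- Auslander–Smalø Lemma: for finite-dimensional modules `M`, `N` with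
Auslander–Reiten translate `τM` (characterised by the Auslander–Reiten formula
`D Ext¹(M, N') ≅ Hom-bar(N', τM)`, assumed here in its vanishing form `hAR`, together with
the fact that `τM` has no nonzero injective direct summands), one has
`Hom_A(N, τM) = 0` iff `Ext¹_A(M, N') = 0` for every `N' ∈ Gen N`. -/
theorem auslander_smalo_lemma (M N τM : ModuleCat.{u} A)
    [Module.Finite A M] [Module.Finite A N] [Module.Finite A τM]
    (hAR : ∀ N' : ModuleCat.{u} A, Module.Finite A N' →
      (Ext1Vanish M N' ↔ ∀ f : N' ⟶ τM, FactorsThroughInjective f))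
    (hnoinj : ∀ (I : ModuleCat.{u} A), CategoryTheory.Injective I →
      ∀ (s : I ⟶ τM) (r : τM ⟶ I), s ≫ r = 𝟙 I → Limits.IsZero I) :
    HomZero N τM ↔
      ∀ N' : ModuleCat.{u} A, Module.Finite A N' → GenClass N N' → Ext1Vanish M N' := by
  constructor
  · rintro h0 N' hfin ⟨n, p, hp⟩
    refine (hAR N' hfin).mpr fun f => ?_
    have hf0 : f = 0 := by
      refine ModuleCat.hom_ext (LinearMap.ext fun x => ?_)
      obtain ⟨v, rfl⟩ := hp x
      have hv : v = ∑ i : Fin n, Pi.single i (v i) := (Finset.univ_sum_single v).symm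
      calc f (p v) = f (p (∑ i : Fin n, Pi.single i (v i))) := by rw [← hv]
        _ = ∑ i : Fin n, f (p (Pi.single i (v i))) := by rw [map_sum, map_sum]
        _ = 0 := Finset.sum_eq_zero fun i _ => by
              have hz := h0 (ModuleCat.ofHom ((f.hom : ↑N' →ₗ[A] ↑τM) ∘ₗ (p.hom : (Fin n → ↑N) →ₗ[A] ↑N')
                ∘ₗ LinearMap.single A (fun _ : Fin n => ↑N) i))
              exact LinearMap.congr_fun (congrArg ModuleCat.Hom.hom hz) (v i)
    exact ⟨ModuleCat.of A PUnit, punit_injective, 0, 0, by rw [hf0]; exact Limits.comp_zero⟩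
  · intro h f
    set FL : ↑N →ₗ[A] ↑τM := (f.hom : ↑N →ₗ[A] ↑τM) with hFLdef
    set S : Submodule A ↑τM := LinearMap.range FL with hSdef
    haveI hfinS : Module.Finite A ↥S := Module.Finite.range FL
    have hfinN' : Module.Finite A ↑(ModuleCat.of A ↥S) := hfinS
    have hgen : GenClass N (ModuleCat.of A ↥S) := by
      refine ⟨1, ModuleCat.ofHom (FL.rangeRestrict ∘ₗ LinearMap.proj 0 : (Fin 1 → ↑N) →ₗ[A] ↥S), ?_⟩
      show Function.Surjective (FL.rangeRestrict ∘ₗ LinearMap.proj 0 : (Fin 1 → ↑N) →ₗ[A] ↥S)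
      exact FL.surjective_rangeRestrict.comp fun x => ⟨fun _ => x, rfl⟩
    have hext : Ext1Vanish M (ModuleCat.of A ↥S) := h _ hfinN' hgen
    let ιh : ModuleCat.of A ↥S ⟶ τM := ModuleCat.ofHom S.subtype
    obtain ⟨I, hI, g, hm, hgh⟩ := (hAR _ hfinN').mp hext ιh
    haveI : CategoryTheory.Injective I := hI
    haveI : Mono ιh := (ModuleCat.mono_iff_injective ιh).mpr S.injective_subtype
    set k : τM ⟶ I := CategoryTheory.Injective.factorThru g ιh with hkdef
    have hcomp : ιh ≫ k = g := CategoryTheory.Injective.comp_factorThru g ιh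
    set gL : ↥S →ₗ[A] ↑I := (g.hom : ↥S →ₗ[A] ↑I) with hgLdef
    set kL : ↑τM →ₗ[A] ↑I := (k.hom : ↑τM →ₗ[A] ↑I) with hkLdef
    set hmL : ↑I →ₗ[A] ↑τM := (hm.hom : ↑I →ₗ[A] ↑τM) with hmLdef
    have h1 : ∀ s : ↥S, kL (S.subtype s) = gL s := fun s =>
      LinearMap.congr_fun (congrArg ModuleCat.Hom.hom hcomp : kL ∘ₗ (S.subtype : ↥S →ₗ[A] ↑τM) = gL) s
    have h2 : ∀ s : ↥S, hmL (gL s) = S.subtype s := fun s =>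
      LinearMap.congr_fun (congrArg ModuleCat.Hom.hom hgh : hmL ∘ₗ gL = (S.subtype : ↥S →ₗ[A] ↑τM)) s
    have hfix : ∀ x ∈ LinearMap.range gL, kL (hmL x) = x := by
      rintro x ⟨s, rfl⟩
      rw [h2 s, h1 s]
    have hbot := key_retract hI hmL kL (LinearMap.range gL) hfix hnoinj
    refine ModuleCat.hom_ext (LinearMap.ext fun x => ?_)
    have hmem : FL x ∈ S := ⟨x, rfl⟩
    have hg0 : gL ⟨FL x, hmem⟩ = 0 := by
      have hmem2 : gL ⟨FL x, hmem⟩ ∈ LinearMap.range gL := ⟨_, rfl⟩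
      rw [hbot] at hmem2
      simpa using hmem2
    show FL x = 0
    rw [show FL x = S.subtype ⟨FL x, hmem⟩ from rfl, ← h2, hg0, map_zero]

end Statements
end

section
/- Let (T, F) be a torsion theory in A-Mod and X ∈ T. Then X is Ext-projective in T (i.e. Ext¹_A(X, T') = 0 for all T' ∈ T) if and only if τX ∈ F. -/
open CategoryTheory

universe u

section HullAux

variable {A : Type u} [Ring A]

private lemma Module.Injective.of_linearEquiv {P Q : Type u} [AddCommGroup P] [Module A P]
    [AddCommGroup Q] [Module A Q] (e : P ≃ₗ[A] Q) (hP : Module.Injective A P) :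
    Module.Injective A Q := by
  constructor
  intro X Y _ _ _ _ f hf g'
  obtain ⟨h', hh'⟩ := hP.out f hf (e.symm.toLinearMap ∘ₗ g')
  exact ⟨e.toLinearMap ∘ₗ h', fun x => by
    simp only [LinearMap.coe_comp, Function.comp_apply, LinearEquiv.coe_coe] at hh' ⊢
    rw [hh' x, LinearEquiv.apply_symm_apply]⟩

/-- The key module-theoretic lemma: if a mono `ι : N → M` factors through an injective module
`I`, then there is an injective submodule `E` of `I` containing the image of `N` in `I`,
such that `E` is (via `h`) a direct summand of `M`. -/
private lemma exists_injective_retract {I M N : Type u}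
    [AddCommGroup I] [Module A I] [AddCommGroup M] [Module A M] [AddCommGroup N] [Module A N]
    (hI : Module.Injective A I) (ι : N →ₗ[A] M) (hι : Function.Injective ι)
    (g : N →ₗ[A] I) (h : I →ₗ[A] M) (hgh : ∀ x, h (g x) = ι x) :
    ∃ E : Submodule A I, Module.Injective A E ∧ LinearMap.range g ≤ E ∧
      ∃ (s : E →ₗ[A] M) (r : M →ₗ[A] E), ∀ e, r (s e) = e := by
  classical
  set N' := LinearMap.range g with hN'def
  set S : Set (Submodule A I) :=
    {P | N' ≤ P ∧ ∀ Q ≤ P, Q ⊓ N' = ⊥ → Q = ⊥} with hSdef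
  -- Zorn 1 : a maximal essential extension `E` of `N'` inside `I`
  obtain ⟨E, -, hE⟩ : ∃ E, N' ≤ E ∧ Maximal (· ∈ S) E := by
    refine zorn_le_nonempty₀ S ?_ N' ⟨le_rfl, ?_⟩
    · rintro c hcS hchain y hy
      refine ⟨sSup c, ⟨le_trans (hcS hy).1 (le_sSup hy), ?_⟩, fun z hz => le_sSup hz⟩
      intro Q hQ hQN
      rw [eq_bot_iff]; intro x hx
      obtain ⟨P, hPc, hxP⟩ :=
        (Submodule.mem_sSup_of_directed ⟨y, hy⟩ hchain.directedOn).1 (hQ hx)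
      have hQP : (Q ⊓ P) ⊓ N' = ⊥ := by
        rw [eq_bot_iff, ← hQN]
        exact le_trans (inf_le_inf_right _ inf_le_left) le_rfl
      have := (hcS hPc).2 (Q ⊓ P) inf_le_right hQP
      have hx0 : x ∈ Q ⊓ P := ⟨hx, hxP⟩
      rw [this] at hx0
      exact hx0
    · intro Q hQ hQN
      rwa [inf_eq_left.2 hQ] at hQN
  have hNE : N' ≤ E := hE.prop.1
  have hEss : ∀ Q ≤ E, Q ⊓ N' = ⊥ → Q = ⊥ := hE.prop.2
  -- Zorn 2 : a maximal complement `C` of `E` in `I`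
  obtain ⟨C, hCmax⟩ : ∃ C, Maximal (fun C : Submodule A I => C ⊓ E = ⊥) C := by
    refine zorn_le₀ _ ?_
    rintro c hcS hchain
    rcases c.eq_empty_or_nonempty with rfl | ⟨y, hy⟩
    · exact ⟨⊥, bot_inf_eq E, fun z hz => absurd hz (Set.notMem_empty z)⟩
    · refine ⟨sSup c, ?_, fun z hz => le_sSup hz⟩
      show sSup c ⊓ E = ⊥
      rw [eq_bot_iff]; rintro x ⟨hx1, hx2⟩
      obtain ⟨P, hPc, hxP⟩ :=
        (Submodule.mem_sSup_of_directed ⟨y, hy⟩ hchain.directedOn).1 hx1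
      have hx0 : x ∈ P ⊓ E := ⟨hxP, hx2⟩
      rw [hcS hPc] at hx0
      exact hx0
  have hCE : C ⊓ E = ⊥ := hCmax.prop
  set q : I →ₗ[A] (I ⧸ C) := C.mkQ with hqdef
  have hq_surj : Function.Surjective q := Submodule.mkQ_surjective C
  have hqker : ∀ x : I, q x = 0 ↔ x ∈ C := by
    intro x; rw [← LinearMap.mem_ker, Submodule.ker_mkQ]
  set j : E →ₗ[A] (I ⧸ C) := q ∘ₗ E.subtype with hjdef
  have hj : Function.Injective j := by
    rw [← LinearMap.ker_eq_bot, eq_bot_iff]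
    rintro ⟨x, hxE⟩ hx
    have hxC : x ∈ C := by
      rw [← hqker]
      exact hx
    have hx0 : x ∈ C ⊓ E := ⟨hxC, hxE⟩
    rw [hCE] at hx0
    exact Submodule.mem_bot _ |>.2 (Subtype.ext hx0)
  obtain ⟨φ, hφ⟩ := hI.out j hj E.subtype
  -- the image of `E` is essential in `I ⧸ C`
  have hjE : ∀ Q' : Submodule A (I ⧸ C), Q' ⊓ LinearMap.range j = ⊥ → Q' = ⊥ := by
    intro Q' hQ'
    have hPE : (Q'.comap q) ⊓ E = ⊥ := by
      rw [eq_bot_iff]; rintro x ⟨hx1, hx2⟩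
      have hqx : q x ∈ Q' ⊓ LinearMap.range j := ⟨hx1, ⟨⟨x, hx2⟩, rfl⟩⟩
      rw [hQ'] at hqx
      have hxC : x ∈ C := (hqker x).1 hqx
      have hx0 : x ∈ C ⊓ E := ⟨hxC, hx2⟩
      rw [hCE] at hx0
      exact hx0
    have hle : C ≤ Q'.comap q := by
      intro x hx
      have : q x = 0 := (hqker x).2 hx
      simp [Submodule.mem_comap, this]
    have hQC : Q'.comap q ≤ C := hCmax.2 hPE hle
    rw [eq_bot_iff]; intro y hy
    obtain ⟨x, rfl⟩ := hq_surj y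
    have hxC : x ∈ C := hQC (by simpa [Submodule.mem_comap] using hy)
    rw [(hqker x).2 hxC]
    exact Submodule.zero_mem _
  have hφinj : Function.Injective φ := by
    rw [← LinearMap.ker_eq_bot]
    apply hjE
    rw [eq_bot_iff]; rintro x ⟨hx1, e, rfl⟩
    have he0 : (e : I) = 0 := (hφ e).symm.trans (LinearMap.mem_ker.1 hx1)
    have : e = 0 := Subtype.ext he0
    rw [this, map_zero]
    exact Submodule.zero_mem _
  set ψ : I →ₗ[A] I := φ ∘ₗ q with hψdef
  have hψE : ∀ x ∈ E, ψ x = x := by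
    intro x hx
    have : q x = j ⟨x, hx⟩ := rfl
    show φ (q x) = x
    rw [this, hφ ⟨x, hx⟩]
    rfl
  -- the image of `ψ` is an essential extension of `N'`, hence equals `E` by maximality
  have hrangeS : LinearMap.range ψ ∈ S := by
    constructor
    · intro x hx; exact ⟨x, hψE x (hNE hx)⟩
    · intro Q' hQ' hQN
      have hQE : Q' ⊓ E = ⊥ := by
        apply hEss _ inf_le_right
        rw [eq_bot_iff, ← hQN]
        exact inf_le_inf_right _ inf_le_left
      have h2 : Q'.comap φ ⊓ LinearMap.range j = ⊥ := by
        rw [eq_bot_iff]; rintro x ⟨hx1, e, rfl⟩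
        have heQ : (e : I) ∈ Q' := by
          have h'' : φ (j e) ∈ Q' := hx1
          rw [hφ e] at h''
          exact h''
        have he0 : (e : I) ∈ Q' ⊓ E := ⟨heQ, e.2⟩
        rw [hQE] at he0
        have : e = 0 := Subtype.ext he0
        rw [this, map_zero]
        exact Submodule.zero_mem _
      have h3 : Q'.comap φ = ⊥ := hjE _ h2
      rw [eq_bot_iff]; intro x hx
      obtain ⟨y, rfl⟩ := hQ' hx
      have hy : q y ∈ Q'.comap φ := by
        exact hx
      rw [h3] at hy
      have : q y = 0 := hy
      show ψ y ∈ (⊥ : Submodule A I)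
      rw [show ψ y = φ (q y) from rfl, this, map_zero]
      exact Submodule.zero_mem _
  have hrangeE : LinearMap.range ψ = E :=
    le_antisymm (hE.2 hrangeS (fun x hx => ⟨x, hψE x hx⟩)) (fun x hx => ⟨x, hψE x hx⟩)
  set π : I →ₗ[A] E := LinearMap.codRestrict E ψ
    (fun x => by rw [← hrangeE]; exact ⟨x, rfl⟩) with hπdef
  have hπ : ∀ (x : I), ((π x : I)) = ψ x := fun x => rfl
  -- E is injective, being a retract of I
  have hEinj : Module.Injective A E := by
    constructor
    intro X Y _ _ _ _ f hf g'
    obtain ⟨h', hh'⟩ := hI.out f hf (E.subtype ∘ₗ g')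
    refine ⟨π ∘ₗ h', fun x => ?_⟩
    have := hh' x
    simp only [LinearMap.coe_comp, Function.comp_apply, Submodule.coe_subtype] at this ⊢
    apply Subtype.ext
    rw [hπ, this, hψE _ (g' x).2]
  -- the endomorphism trick
  obtain ⟨k, hk⟩ := hI.out ι hι g
  set w : I →ₗ[A] I := ψ ∘ₗ (k ∘ₗ h) with hwdef
  have hwN' : ∀ n : N, w (g n) = g n := by
    intro n
    show ψ (k (h (g n))) = g n
    rw [hgh n, hk n, hψE _ (hNE ⟨n, rfl⟩)]
  have hwE : ∀ x : I, w x ∈ E := by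
    intro x
    rw [← hrangeE]
    exact ⟨k (h x), rfl⟩
  have hker : ∀ x ∈ E, w x = 0 → x = 0 := by
    intro x hxE hwx
    have hsub : (LinearMap.ker w ⊓ E) ⊓ N' = ⊥ := by
      rw [eq_bot_iff]; rintro y ⟨⟨hy1, hy2⟩, hy3⟩
      obtain ⟨n, rfl⟩ := hy3
      have hy1' : w (g n) = 0 := hy1
      have : g n = 0 := by rw [← hwN' n]; exact hy1'
      rw [this]; exact Submodule.zero_mem _
    have hbot := hEss (LinearMap.ker w ⊓ E) inf_le_right hsub
    have hx0 : x ∈ LinearMap.ker w ⊓ E := ⟨hwx, hxE⟩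
    rw [hbot] at hx0
    exact hx0
  set G : Submodule A I := Submodule.map w E with hGdef
  have hGE : G ≤ E := by rintro x ⟨y, hy, rfl⟩; exact hwE y
  have hN'G : N' ≤ G := by
    rintro x ⟨n, rfl⟩
    exact ⟨g n, hNE ⟨n, rfl⟩, hwN' n⟩
  -- G is injective: it is isomorphic to E
  set wE : E →ₗ[A] G := LinearMap.codRestrict G (w ∘ₗ E.subtype)
    (fun e => ⟨e, e.2, rfl⟩) with hwEdef
  have hwEbij : Function.Bijective wE := by
    constructor
    · intro a b hab
      have : w ((a : I) - b) = 0 := by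
        have h2 : w (a : I) = w (b : I) := congrArg (Subtype.val : G → I) hab
        rw [map_sub, h2, sub_self]
      have := hker _ (Submodule.sub_mem E a.2 b.2) this
      exact Subtype.ext (by rw [← sub_eq_zero]; exact this)
    · rintro ⟨y, x, hxE, rfl⟩
      exact ⟨⟨x, hxE⟩, rfl⟩
  have hGinj : Module.Injective A G :=
    Module.Injective.of_linearEquiv (LinearEquiv.ofBijective wE hwEbij) hEinj
  -- G = E
  obtain ⟨ρ, hρ⟩ := hGinj.out (Submodule.inclusion hGE)
    (Submodule.inclusion_injective hGE) LinearMap.id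
  set ρ₂ : E →ₗ[A] I := G.subtype ∘ₗ ρ with hρ₂def
  have hρfix : ∀ (e : E), (e : I) ∈ G → ρ₂ e = e := by
    intro e he
    have : e = Submodule.inclusion hGE ⟨(e : I), he⟩ := Subtype.ext rfl
    rw [this]
    show (G.subtype) (ρ (Submodule.inclusion hGE ⟨(e : I), he⟩)) = _
    rw [hρ ⟨(e : I), he⟩]
    rfl
  have hρinj : ∀ e : E, ρ₂ e = 0 → (e : I) = 0 := by
    intro e he
    have hsub : (Submodule.map E.subtype (LinearMap.ker ρ₂)) ⊓ N' = ⊥ := by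
      rw [eq_bot_iff]; rintro y ⟨⟨e', he', rfl⟩, hy2⟩
      have he'2 : ρ₂ e' = 0 := he'
      have h3 : ρ₂ e' = (e' : I) := hρfix e' (hN'G hy2)
      rw [he'2] at h3
      simp only [Submodule.mem_bot]
      exact h3.symm
    have hbot := hEss _ (by rintro y ⟨e', _, rfl⟩; exact e'.2) hsub
    have : (e : I) ∈ Submodule.map E.subtype (LinearMap.ker ρ₂) := ⟨e, he, rfl⟩
    rw [hbot] at this
    exact this
  have hGeqE : G = E := by
    refine le_antisymm hGE ?_
    intro x hxE
    set e : E := ⟨x, hxE⟩ with hedef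
    have h1 : ρ₂ e ∈ G := (ρ e).2
    set e' : E := ⟨ρ₂ e, hGE h1⟩ with he'def
    have h2 : ρ₂ e' = ρ₂ e := hρfix e' h1
    have h3 : ρ₂ (e - e') = 0 := by rw [map_sub, h2, sub_self]
    have h4 := hρinj _ h3
    have h5 : (e : I) = (e' : I) := by
      rwa [Submodule.coe_sub, sub_eq_zero] at h4
    rw [show x = (e : I) from rfl, h5]
    exact h1
  -- the bijection v on E induced by w
  set vE : E →ₗ[A] E := LinearMap.codRestrict E (w ∘ₗ E.subtype)
    (fun e => hwE e) with hvEdef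
  have hvbij : Function.Bijective vE := by
    constructor
    · intro a b hab
      have : w ((a : I) - b) = 0 := by
        have h2 : w (a : I) = w (b : I) := congrArg (Subtype.val : E → I) hab
        rw [map_sub, h2, sub_self]
      have := hker _ (Submodule.sub_mem E a.2 b.2) this
      exact Subtype.ext (by rw [← sub_eq_zero]; exact this)
    · intro e
      have : (e : I) ∈ G := by rw [hGeqE]; exact e.2
      obtain ⟨x, hxE, hx⟩ := this
      exact ⟨⟨x, hxE⟩, Subtype.ext hx⟩
  set v : E ≃ₗ[A] E := LinearEquiv.ofBijective vE hvbij with hvdef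
  refine ⟨E, hEinj, hNE, h ∘ₗ E.subtype, v.symm.toLinearMap ∘ₗ (π ∘ₗ k), fun e => ?_⟩
  have h1 : π (k (h (e : I))) = vE e := by
    apply Subtype.ext
    rw [hπ]
    rfl
  show v.symm (π (k (h (e : I)))) = e
  rw [h1]
  exact v.symm_apply_apply e

end HullAux

section Statements

variable (K : Type u) [Field K] (A : Type u) [Ring A] [Algebra K A] [FiniteDimensional K A]

/-- For a torsion theory `(T, F)` and `X ∈ T` with Auslander–Reiten translate
`τX` (with the Auslander–Smalø lemma / AR formula assumed via `hAR`, and `τX` having no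
nonzero injective summands), `X` is Ext-projective in `T` iff `τX ∈ F`. -/
theorem ext_projective_iff_tau_torsionFree (TT : TorsionTheory A)
    (X τX : ModuleCat.{u} A) [Module.Finite A X] [Module.Finite A τX]
    (hX : TT.T X)
    (hAR : ∀ N' : ModuleCat.{u} A, Module.Finite A N' →
      (Ext1Vanish X N' ↔ ∀ f : N' ⟶ τX, FactorsThroughInjective f))
    (hnoinj : ∀ (I : ModuleCat.{u} A), CategoryTheory.Injective I →
      ∀ (s : I ⟶ τX) (r : τX ⟶ I), s ≫ r = 𝟙 I → Limits.IsZero I) :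
    (∀ T' : ModuleCat.{u} A, TT.T T' → Ext1Vanish X T') ↔ TT.F τX := by
  constructor
  · -- forward: Ext-projective in T implies τX torsion-free
    intro hproj
    obtain ⟨t, hTt, hFt⟩ := TT.ses τX inferInstance
    -- the inclusion of the torsion part t of τX factors through an injective
    have hfin : Module.Finite A (ModuleCat.of A t) := TT.T_fin _ hTt
    have hext : Ext1Vanish X (ModuleCat.of A t) := hproj _ hTt
    have hfac := (hAR (ModuleCat.of A t) hfin).1 hext
      (ModuleCat.ofHom t.subtype)
    obtain ⟨I, hIinj, g, h, hgh⟩ := hfac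
    haveI : CategoryTheory.Injective (ModuleCat.of A I) := hIinj
    have hImod : Module.Injective A I := Module.injective_module_of_injective_object A I
    have hcomp : ∀ x : t, h (g x) = t.subtype x := fun x => by
      have := congrArg (fun f => (f : ModuleCat.of A t ⟶ τX) x) hgh
      exact this
    obtain ⟨E, hEinj, hNE, s, r, hrs⟩ :=
      exists_injective_retract hImod t.subtype (Submodule.injective_subtype t)
        (g.hom : t →ₗ[A] I) (h.hom : I →ₗ[A] τX) hcomp
    haveI : CategoryTheory.Injective (ModuleCat.of A E) :=
      Module.injective_object_of_injective_module (inj := hEinj)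
    have hz : Limits.IsZero (ModuleCat.of A E) :=
      hnoinj (ModuleCat.of A E) inferInstance
        (ModuleCat.ofHom s) (ModuleCat.ofHom r)
        (by
          ext e
          exact congrArg Subtype.val (hrs e))
    -- E is trivial, hence t = ⊥
    have hid : (𝟙 (ModuleCat.of A E) : ModuleCat.of A E ⟶ ModuleCat.of A E) = 0 :=
      hz.eq_of_src _ _
    have hsub : ∀ x : E, x = 0 := fun x => by
      have := congrArg (fun f => (f : ModuleCat.of A E ⟶ ModuleCat.of A E) x) hid
      exact this
    have ht : t = ⊥ := by
      rw [eq_bot_iff]; intro x hx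
      have h1 : g ⟨x, hx⟩ ∈ E := hNE ⟨⟨x, hx⟩, rfl⟩
      have h2 : g ⟨x, hx⟩ = 0 := by
        have := hsub ⟨g ⟨x, hx⟩, h1⟩
        exact congrArg Subtype.val this
      have h3 : x = 0 := by
        have := hcomp ⟨x, hx⟩
        rw [h2, map_zero] at this
        exact this.symm
      rw [h3]; exact Submodule.zero_mem _
    exact TT.F_iso (Submodule.quotEquivOfEqBot t ht).toModuleIso hFt
  · -- backward: τX torsion-free implies Ext-projective in T
    intro hF T' hT'
    refine (hAR T' (TT.T_fin T' hT')).2 ?_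
    intro f
    have hf0 : f = 0 := TT.hom_zero T' τX hT' hF f
    have hPUnit : Module.Injective A PUnit.{u+1} :=
      ⟨fun X Y _ _ _ _ f' hf' g' => ⟨0, fun x => Subsingleton.elim _ _⟩⟩
    refine ⟨ModuleCat.of A PUnit.{u+1},
      Module.injective_object_of_injective_module (inj := hPUnit), 0, 0, ?_⟩
    rw [hf0]
    simp

end Statements
end

section
/- (Auslander–Smalø Theorem, split projectivity) Let T be a functorially finite torsion class in A-Mod and let f : A → T₀ be a T-envelope of the regular module A. Then T₀ is a splitting projective in T: for every X ∈ T, every epimorphism X → T₀ splits. Moreover Gen T₀ = T and T₀ ⊕ coker f is Ext-projective in T. -/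
open CategoryTheory

universe u

section AuxLemmas

variable {A : Type u} [Ring A]

/-- Finite powers of a module in a torsion class stay in the class. -/
lemma tclass_pi (𝒯 : ModuleCat.{u} A → Prop)
    (hiso : ∀ {X Y : ModuleCat.{u} A}, (X ≅ Y) → 𝒯 X → 𝒯 Y)
    (hquot : ClosedUnderQuotients 𝒯) (hext : ClosedUnderExtensions 𝒯)
    (T₀ : ModuleCat.{u} A) (hT₀ : 𝒯 T₀) :
    ∀ n : ℕ, 𝒯 (ModuleCat.of A (Fin n → T₀)) := by
  intro n
  induction n with
  | zero =>
      have h0 : 𝒯 (ModuleCat.of A ((T₀ : Type u) ⧸ (⊤ : Submodule A T₀))) := hquot T₀ hT₀ ⊤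
      have hsub : Subsingleton ((T₀ : Type u) ⧸ (⊤ : Submodule A T₀)) :=
        Submodule.Quotient.subsingleton_iff.2 rfl
      exact hiso (LinearEquiv.toModuleIso
        (LinearEquiv.ofSubsingleton (R := A)
          ((T₀ : Type u) ⧸ (⊤ : Submodule A T₀)) (Fin 0 → T₀))) h0
  | succ n ih =>
      let i0 : (Fin n → T₀) →ₗ[A] (Fin (n + 1) → T₀) :=
        LinearMap.pi (fun j => Fin.cases 0 (fun k => LinearMap.proj k) j)
      let p0 : (Fin (n + 1) → T₀) →ₗ[A] T₀ := LinearMap.proj 0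
      have hses : IsSES (X := ModuleCat.of A (Fin n → T₀))
          (Y := ModuleCat.of A (Fin (n + 1) → T₀)) (Z := T₀) (ModuleCat.ofHom i0) (ModuleCat.ofHom p0) := by
        refine ⟨?_, ?_, ?_⟩
        · intro v w h
          funext k
          have h2 : i0 v k.succ = i0 w k.succ := congrFun h k.succ
          simpa only [i0, LinearMap.pi_apply, Fin.cases_succ, LinearMap.proj_apply] using h2
        · intro t
          exact ⟨Fin.cons t 0, rfl⟩
        · apply le_antisymm
          · rintro _ ⟨v, rfl⟩
            show p0 (i0 v) = 0
            simp only [i0, p0, LinearMap.proj_apply, LinearMap.pi_apply, Fin.cases_zero,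
              LinearMap.zero_apply]
          · rintro w (hw : w 0 = 0)
            refine ⟨fun k => w k.succ, ?_⟩
            funext j
            refine Fin.cases ?_ ?_ j
            · simpa only [i0, ModuleCat.hom_ofHom, LinearMap.pi_apply, Fin.cases_zero, LinearMap.zero_apply]
                using hw.symm
            · intro k
              rfl
      exact hext (X := ModuleCat.of A (Fin n → T₀))
        (Y := ModuleCat.of A (Fin (n + 1) → T₀)) (Z := T₀) (ModuleCat.ofHom i0) (ModuleCat.ofHom p0) hses ih hT₀

end AuxLemmas

section Statements

variable (K : Type u) [Field K] (A : Type u) [Ring A] [Algebra K A] [FiniteDimensional K A]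

/-- Auslander–Smalø Theorem: if `𝒯` is a functorially finite torsion class and
`f : A → T₀` is a `𝒯`-envelope of the regular module, then every epimorphism `X → T₀` with
`X ∈ 𝒯` splits, `Gen T₀ = 𝒯`, and `T₀ ⊕ coker f` is Ext-projective in `𝒯`. -/
theorem auslander_smalo_theorem (𝒯 : ModuleCat.{u} A → Prop)
    (hiso : ∀ {X Y : ModuleCat.{u} A}, (X ≅ Y) → 𝒯 X → 𝒯 Y)
    (hquot : ClosedUnderQuotients 𝒯) (hext : ClosedUnderExtensions 𝒯)
    (hfin : ∀ X, 𝒯 X → Module.Finite A X)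
    (hff : ∀ X : ModuleCat.{u} A, Module.Finite A X →
      (∃ (Cx : ModuleCat.{u} A) (θ : X ⟶ Cx), IsEnvelope 𝒯 θ) ∧
      (∃ (Cx : ModuleCat.{u} A) (θ : Cx ⟶ X), IsCover 𝒯 θ))
    (T₀ : ModuleCat.{u} A) (f : ModuleCat.of A A ⟶ T₀) (hf : IsEnvelope 𝒯 f) :
    (∀ X : ModuleCat.{u} A, 𝒯 X → ∀ p : X ⟶ T₀, Function.Surjective p →
      ∃ s : T₀ ⟶ X, s ≫ p = 𝟙 T₀) ∧
    (∀ X : ModuleCat.{u} A, Module.Finite A X → (𝒯 X ↔ GenClass T₀ X)) ∧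
    (∀ X : ModuleCat.{u} A, 𝒯 X → Ext1Vanish T₀ X ∧
      Ext1Vanish (ModuleCat.of A
        ((T₀ : Type u) ⧸ LinearMap.range (f.hom : ModuleCat.of A A →ₗ[A] T₀))) X) := by
  obtain ⟨⟨hT₀, hpre⟩, hmin⟩ := hf
  -- Part 1 : split projectivity of T₀
  have part1 : ∀ X : ModuleCat.{u} A, 𝒯 X → ∀ p : X ⟶ T₀, Function.Surjective p →
      ∃ s : T₀ ⟶ X, s ≫ p = 𝟙 T₀ := by
    intro X hX p hp
    obtain ⟨x₀, hx₀⟩ := hp (f (1 : A))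
    let g : ModuleCat.of A A ⟶ X := ModuleCat.ofHom (LinearMap.toSpanSingleton A X x₀)
    have hg : ∀ a : A, p (g a) = f a := by
      intro a
      show p (a • x₀) = f a
      rw [map_smul, hx₀, ← map_smul]
      congr 1
      exact (smul_eq_mul _ _).trans (mul_one a)
    obtain ⟨h, hh⟩ := hpre X hX g
    have hfac : f ≫ (h ≫ p) = f := by
      apply ModuleCat.hom_ext
      apply LinearMap.ext
      intro a
      have h1 : h (f a) = g a := DFunLike.congr_fun (congrArg ModuleCat.Hom.hom hh) a
      show p (h (f a)) = f a
      rw [h1, hg]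
    have hbij := hmin (h ≫ p) hfac
    let e := LinearEquiv.ofBijective ((h ≫ p).hom : (T₀ : Type u) →ₗ[A] T₀) hbij
    refine ⟨(ModuleCat.ofHom ((h.hom : (T₀ : Type u) →ₗ[A] X).comp e.symm.toLinearMap) : T₀ ⟶ X), ?_⟩
    apply ModuleCat.hom_ext
    apply LinearMap.ext
    intro t
    show p (h (e.symm t)) = t
    exact e.apply_symm_apply t
  -- GenClass T₀ ⊆ 𝒯
  have genT : ∀ X : ModuleCat.{u} A, GenClass T₀ X → 𝒯 X := by
    rintro X ⟨n, p, hp⟩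
    have hpow := tclass_pi 𝒯 hiso hquot hext T₀ hT₀ n
    have hq := hquot _ hpow (LinearMap.ker (p.hom : (Fin n → T₀) →ₗ[A] X))
    exact hiso (LinearEquiv.toModuleIso
      (LinearMap.quotKerEquivOfSurjective (p.hom : (Fin n → T₀) →ₗ[A] X) hp)) hq
  -- Part 2
  have part2 : ∀ X : ModuleCat.{u} A, Module.Finite A X → (𝒯 X ↔ GenClass T₀ X) := by
    intro X hXfin
    refine ⟨?_, genT X⟩
    intro hX
    haveI : Module.Finite A X := hXfin
    obtain ⟨n, sgen, hspan⟩ := Module.Finite.exists_fin (R := A) (M := X)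
    choose g hg using fun j : Fin n =>
      hpre X hX (ModuleCat.ofHom (LinearMap.toSpanSingleton A X (sgen j)) : ModuleCat.of A A ⟶ X)
    let P0 : (Fin n → (T₀ : Type u)) →ₗ[A] X :=
      ∑ j, (((g j).hom : (T₀ : Type u) →ₗ[A] X).comp (LinearMap.proj j))
    refine ⟨n, (ModuleCat.ofHom P0 : ModuleCat.of A (Fin n → T₀) ⟶ X), ?_⟩
    show Function.Surjective P0
    rw [← LinearMap.range_eq_top, ← top_le_iff, ← hspan, Submodule.span_le]
    rintro _ ⟨j, rfl⟩
    let v : Fin n → (T₀ : Type u) := Pi.single j (f (1 : A))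
    refine ⟨v, ?_⟩
    have hPapp : P0 v = ∑ k, g k (v k) := by
      simp [P0, LinearMap.sum_apply]
    rw [hPapp, Finset.sum_eq_single j
      (fun k _ hk => by
        have hk0 : v k = 0 := Pi.single_eq_of_ne hk _
        rw [hk0, map_zero])
      (fun hj => absurd (Finset.mem_univ j) hj)]
    have hvj : v j = f (1 : A) := Pi.single_eq_same j _
    rw [hvj]
    have h1 : g j (f (1 : A)) = LinearMap.toSpanSingleton A X (sgen j) (1 : A) :=
      DFunLike.congr_fun (congrArg ModuleCat.Hom.hom (hg j)) (1 : A)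
    rw [h1, LinearMap.toSpanSingleton_apply, one_smul]
  -- Part 3a : Ext¹(T₀, X) = 0
  have ext1 : ∀ X : ModuleCat.{u} A, 𝒯 X → Ext1Vanish T₀ X := by
    intro X hX E i p hses
    have hE : 𝒯 E := hext i p hses hX hT₀
    exact part1 E hE p hses.surj
  -- Part 3b : Ext¹(T₀ / im f, X) = 0
  have ext2 : ∀ X : ModuleCat.{u} A, 𝒯 X → Ext1Vanish (ModuleCat.of A
      ((T₀ : Type u) ⧸ LinearMap.range (f.hom : ModuleCat.of A A →ₗ[A] T₀))) X := by
    intro X hX E i p hses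
    let R : Submodule A T₀ := LinearMap.range (f.hom : ModuleCat.of A A →ₗ[A] T₀)
    let Q : ModuleCat.{u} A := ModuleCat.of A ((T₀ : Type u) ⧸ R)
    let π : (↥T₀) →ₗ[A] (↥Q) := R.mkQ
    let pl : (↥E) →ₗ[A] (↥Q) := p.hom
    let il : (↥X) →ₗ[A] (↥E) := i.hom
    -- the pullback of p along π
    let L : (↥T₀ × ↥E) →ₗ[A] (↥Q) :=
      π.comp (LinearMap.fst A ↥T₀ ↥E) - pl.comp (LinearMap.snd A ↥T₀ ↥E)
    let K : Submodule A (↥T₀ × ↥E) := LinearMap.ker L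
    let pr1 : (↥K) →ₗ[A] (↥T₀) := (LinearMap.fst A ↥T₀ ↥E).comp K.subtype
    let pr2 : (↥K) →ₗ[A] (↥E) := (LinearMap.snd A ↥T₀ ↥E).comp K.subtype
    have hmemK : ∀ z : ↥T₀ × ↥E, π z.1 = p z.2 → z ∈ K := by
      intro z hz
      show L z = 0
      show π z.1 - p z.2 = 0
      rw [hz, sub_self]
    have hKval : ∀ z : ↥K, π (z : ↥T₀ × ↥E).1 = p (z : ↥T₀ × ↥E).2 := by
      intro z
      have hz : L (z : ↥T₀ × ↥E) = 0 := z.2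
      have hz2 : π (z : ↥T₀ × ↥E).1 - p (z : ↥T₀ × ↥E).2 = 0 := hz
      exact sub_eq_zero.mp hz2
    have hpi : ∀ x : ↥X, p (i x) = 0 := by
      intro x
      have h1 := LinearMap.mem_range_self (i.hom : (↥X) →ₗ[A] (↥E)) x
      rw [hses.exact] at h1
      exact LinearMap.mem_ker.mp h1
    let i' : (↥X) →ₗ[A] (↥K) := LinearMap.codRestrict K
      ((LinearMap.inr A ↥T₀ ↥E).comp il)
      (fun x => hmemK (0, i x) (by show π 0 = p (i x); rw [map_zero, hpi x]))
    have hses' : IsSES (X := X) (Y := ModuleCat.of A K) (Z := T₀)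
        (ModuleCat.ofHom i' : X ⟶ ModuleCat.of A K) (ModuleCat.ofHom pr1 : ModuleCat.of A K ⟶ T₀) := by
      refine ⟨?_, ?_, ?_⟩
      · intro x y hxy
        apply hses.inj
        exact congrArg (fun z : ↥K => (z : ↥T₀ × ↥E).2) hxy
      · intro t
        obtain ⟨e, he⟩ := hses.surj (π t)
        exact ⟨⟨(t, e), hmemK (t, e) he.symm⟩, rfl⟩
      · apply le_antisymm
        · rintro _ ⟨x, rfl⟩
          show pr1 (i' x) = 0
          rfl
        · rintro ⟨⟨t0, e0⟩, hzK⟩ hz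
          have ht0 : t0 = 0 := hz
          have h2 : p e0 = 0 := by
            have h2a : π t0 = p e0 := hKval ⟨(t0, e0), hzK⟩
            rw [ht0, map_zero] at h2a
            exact h2a.symm
          have h3 : e0 ∈ LinearMap.range (i.hom : (↥X) →ₗ[A] (↥E)) := by
            rw [hses.exact]; exact LinearMap.mem_ker.mpr h2
          obtain ⟨x, hx⟩ := h3
          refine ⟨x, ?_⟩
          apply Subtype.ext
          show ((0 : ↥T₀), i x) = (t0, e0)
          rw [ht0, hx]
    have hKT : 𝒯 (ModuleCat.of A K) :=
      hext (X := X) (Y := ModuleCat.of A K) (Z := T₀) (ModuleCat.ofHom i') (ModuleCat.ofHom pr1) hses' hX hT₀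
    obtain ⟨s, hs⟩ := part1 (ModuleCat.of A K) hKT (ModuleCat.ofHom pr1) hses'.surj
    let σ : (↥T₀) →ₗ[A] (↥E) := pr2.comp (s.hom : (↥T₀) →ₗ[A] (↥K))
    have hpσ : ∀ t : ↥T₀, p (σ t) = π t := by
      intro t
      have h1 : pr1 (s t) = t := DFunLike.congr_fun (congrArg ModuleCat.Hom.hom hs) t
      have h2 : π (pr1 (s t)) = p (pr2 (s t)) := hKval (s t)
      rw [h1] at h2
      exact h2.symm
    have hgmem : ∀ a : A, σ (f a) ∈ LinearMap.range (i.hom : (↥X) →ₗ[A] (↥E)) := by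
      intro a
      rw [hses.exact]
      show p (σ (f a)) = 0
      rw [hpσ]
      show R.mkQ (f a) = 0
      rw [Submodule.mkQ_apply]
      exact (Submodule.Quotient.mk_eq_zero R).2 ⟨a, rfl⟩
    let eI := LinearEquiv.ofInjective (i.hom : (↥X) →ₗ[A] (↥E)) hses.inj
    let h0 : A →ₗ[A] (↥X) := eI.symm.toLinearMap.comp
      (LinearMap.codRestrict (LinearMap.range (i.hom : (↥X) →ₗ[A] (↥E)))
        (σ.comp (f.hom : A →ₗ[A] (↥T₀))) hgmem)
    have hih0 : ∀ a : A, i (h0 a) = σ (f a) := by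
      intro a
      show (i (eI.symm ⟨σ (f a), hgmem a⟩) : ↥E) = σ (f a)
      have h3 : (i (eI.symm ⟨σ (f a), hgmem a⟩) : ↥E) =
          ((eI (eI.symm ⟨σ (f a), hgmem a⟩)) : ↥E) :=
        (LinearEquiv.ofInjective_apply (i.hom : (↥X) →ₗ[A] (↥E))
          (eI.symm ⟨σ (f a), hgmem a⟩)).symm
      rw [h3, eI.apply_symm_apply]
    obtain ⟨h', hh'⟩ := hpre X hX (ModuleCat.ofHom h0 : ModuleCat.of A A ⟶ X)
    let σ' : (↥T₀) →ₗ[A] (↥E) := σ - il.comp (h'.hom : (↥T₀) →ₗ[A] (↥X))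
    have hker : R ≤ LinearMap.ker σ' := by
      rintro _ ⟨a, rfl⟩
      show σ (f a) - i (h' (f a)) = 0
      have h4 : h' (f a) = h0 a := DFunLike.congr_fun (congrArg ModuleCat.Hom.hom hh') a
      rw [h4, hih0, sub_self]
    let τ : ((T₀ : Type u) ⧸ R) →ₗ[A] (↥E) := R.liftQ σ' hker
    refine ⟨(ModuleCat.ofHom τ : Q ⟶ E), ?_⟩
    apply ModuleCat.hom_ext
    apply LinearMap.ext
    intro c
    obtain ⟨t, rfl⟩ := Submodule.mkQ_surjective R c
    show p (τ (R.mkQ t)) = R.mkQ t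
    rw [Submodule.mkQ_apply, Submodule.liftQ_apply]
    have h5 : σ' t = σ t - i (h' t) := rfl
    rw [h5, map_sub, hpσ, hpi (h' t), sub_zero]
    rfl
  exact ⟨part1, part2, fun X hX => ⟨ext1 X hX, ext2 X hX⟩⟩

end Statements
end

section
/- (Bongartz completion for partial tilting modules) Let M be a partial tilting A-module (Ext¹_A(M,M) = 0 and proj.dim M ≤ 1). Let 0 → A → E → Mⁿ → 0 be the universal extension built from a basis ξ₁,…,ξₙ of Ext¹_A(M, A). Then T = E ⊕ M is a tilting module: Ext¹_A(T,T) = 0, proj.dim T ≤ 1, and there is an exact sequence 0 → A → T⁰ → T¹ → 0 with T⁰, T¹ ∈ add T. -/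
open CategoryTheory

universe u

namespace Bongartz
open CategoryTheory.Limits
variable {A : Type u} [Ring A]

lemma reduce_step {Y₁ Y Y₂ X W : ModuleCat.{u} A} (u : Y₁ ⟶ Y) (v : Y ⟶ Y₂) (huv : IsSES u v)
    (a : Y ⟶ W) (b : W ⟶ X) (hab : IsSES a b) (h₂ : Ext1Vanish X Y₂) :
    ∃ (V : Submodule A W) (c : Y₁ ⟶ ModuleCat.of A V) (d : ModuleCat.of A V ⟶ X),
      IsSES c d ∧ (∀ y₁ : Y₁, V.subtype (c y₁) = a (u y₁)) ∧
        (∀ z, d z = b (V.subtype z)) := by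
  set N : Submodule A W := LinearMap.range ((a.hom : Y →ₗ[A] W) ∘ₗ (u.hom : Y₁ →ₗ[A] Y)) with hN
  have hba : ∀ y : Y, b (a y) = 0 := fun y =>
    show a y ∈ LinearMap.ker (b.hom : W →ₗ[A] X) from hab.exact ▸ ⟨y, rfl⟩
  have hvu : ∀ y₁ : Y₁, v (u y₁) = 0 := fun y₁ =>
    show u y₁ ∈ LinearMap.ker (v.hom : Y →ₗ[A] Y₂) from huv.exact ▸ ⟨y₁, rfl⟩
  set Wb := ModuleCat.of A (W ⧸ N) with hWb
  set q : W →ₗ[A] Wb := N.mkQ with hq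
  have hNb : N ≤ LinearMap.ker (b.hom : W →ₗ[A] X) := by
    rintro w ⟨y₁, rfl⟩
    exact hba (u y₁)
  set bbar : Wb ⟶ X := ModuleCat.ofHom (N.liftQ (b.hom : W →ₗ[A] X) hNb) with hbbar
  set e₂ := (v.hom : Y →ₗ[A] Y₂).quotKerEquivOfSurjective huv.surj with he₂
  have hker : LinearMap.ker (v.hom : Y →ₗ[A] Y₂) ≤ LinearMap.ker (q ∘ₗ (a.hom : Y →ₗ[A] W)) := by
    intro y hy
    obtain ⟨y₁, hy₁⟩ : y ∈ LinearMap.range (u.hom : Y₁ →ₗ[A] Y) := huv.exact ▸ hy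
    show q (a y) = 0
    rw [← hy₁]
    exact (Submodule.Quotient.mk_eq_zero N).mpr ⟨y₁, rfl⟩
  set abar : Y₂ ⟶ Wb := ModuleCat.ofHom
    (((LinearMap.ker (v.hom : Y →ₗ[A] Y₂)).liftQ (q ∘ₗ (a.hom : Y →ₗ[A] W)) hker).comp
      (e₂.symm : Y₂ →ₗ[A] _)) with habardef
  have habar : ∀ y : Y, abar (v y) = q (a y) := by
    intro y
    have h1 : e₂.symm (v y) = Submodule.Quotient.mk y := by
      rw [LinearEquiv.symm_apply_eq]; rfl
    show ((LinearMap.ker (v.hom : Y →ₗ[A] Y₂)).liftQ (q ∘ₗ (a.hom : Y →ₗ[A] W)) hker) (e₂.symm (v y))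
        = q (a y)
    rw [h1]; rfl
  have hses2 : IsSES abar bbar := by
    refine ⟨?_, ?_, ?_⟩
    · have h0 : ∀ z : Y₂, abar z = 0 → z = 0 := by
        intro z hz
        obtain ⟨y, rfl⟩ := huv.surj z
        rw [habar y] at hz
        obtain ⟨y₁, hy₁⟩ := (Submodule.Quotient.mk_eq_zero N).mp hz
        have hy : y = u y₁ := hab.inj hy₁.symm
        rw [hy]; exact hvu y₁
      exact (injective_iff_map_eq_zero (abar.hom : Y₂ →ₗ[A] Wb)).mpr h0
    · intro x
      obtain ⟨w, rfl⟩ := hab.surj x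
      exact ⟨q w, rfl⟩
    · apply le_antisymm
      · rintro _ ⟨z, rfl⟩
        obtain ⟨y, rfl⟩ := huv.surj z
        show bbar (abar (v y)) = 0
        rw [habar]
        exact hba y
      · rintro t ht
        obtain ⟨w, rfl⟩ := Submodule.mkQ_surjective N t
        have hw : b w = 0 := ht
        obtain ⟨y, hy⟩ : w ∈ LinearMap.range (a.hom : Y →ₗ[A] W) := hab.exact ▸ hw
        exact ⟨v y, by rw [habar y, hy]⟩
  obtain ⟨s₂, hs₂⟩ := h₂ Wb abar bbar hses2
  have hs₂' : ∀ x : X, bbar (s₂ x) = x := fun x => ConcreteCategory.congr_hom hs₂ x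
  set V : Submodule A W :=
    LinearMap.ker (q - (s₂.hom : X →ₗ[A] Wb) ∘ₗ (b.hom : W →ₗ[A] X)) with hV
  have hVmem : ∀ w : W, w ∈ V ↔ q w = s₂ (b w) := by
    intro w
    constructor
    · intro h; exact sub_eq_zero.mp h
    · intro h; exact sub_eq_zero.mpr h
  have hcmem : ∀ y₁ : Y₁, a (u y₁) ∈ V := by
    intro y₁
    rw [hVmem]
    rw [hba (u y₁), map_zero]
    exact (Submodule.Quotient.mk_eq_zero N).mpr ⟨y₁, rfl⟩
  set c : Y₁ ⟶ ModuleCat.of A V := ModuleCat.ofHom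
    (LinearMap.codRestrict V ((a.hom : Y →ₗ[A] W) ∘ₗ (u.hom : Y₁ →ₗ[A] Y)) hcmem) with hc
  set d : ModuleCat.of A V ⟶ X := ModuleCat.ofHom ((b.hom : W →ₗ[A] X) ∘ₗ V.subtype) with hd
  have hsescd : IsSES c d := by
    refine ⟨?_, ?_, ?_⟩
    · intro y₁ y₂ h
      exact huv.inj (hab.inj (Subtype.ext_iff.mp h))
    · intro x
      obtain ⟨w, hw⟩ := hab.surj x
      have h3 : bbar (q w - s₂ x) = 0 := by
        rw [map_sub, hs₂' x]
        show b w - x = 0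
        rw [hw, sub_self]
      obtain ⟨z, hz⟩ : q w - s₂ x ∈ LinearMap.range (abar.hom : Y₂ →ₗ[A] Wb) :=
        hses2.exact ▸ h3
      obtain ⟨y, rfl⟩ := huv.surj z
      rw [habar] at hz
      refine ⟨⟨w - a y, ?_⟩, ?_⟩
      · rw [hVmem]
        rw [map_sub, map_sub, hba y, sub_zero, hw, hz]
        abel
      · show b (w - a y) = x
        rw [map_sub, hba y, hw, sub_zero]
    · apply le_antisymm
      · rintro _ ⟨y₁, rfl⟩
        show b (a (u y₁)) = 0
        exact hba (u y₁)
      · rintro ⟨w, hwV⟩ hk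
        have hw : b w = 0 := hk
        obtain ⟨y, hy⟩ : w ∈ LinearMap.range (a.hom : Y →ₗ[A] W) := hab.exact ▸ hw
        have h5 : q w = 0 := by
          have h6 := (hVmem w).mp hwV
          rw [hw, map_zero] at h6
          exact h6
        obtain ⟨y₁, hy₁⟩ := (Submodule.Quotient.mk_eq_zero N).mp
          (show q (a y) = 0 by rw [hy]; exact h5)
        have : y = u y₁ := hab.inj hy₁.symm
        exact ⟨y₁, Subtype.ext (by show a (u y₁) = w; rw [← this, hy])⟩
  exact ⟨V, c, d, hsescd, fun y₁ => rfl, fun z => rfl⟩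

lemma ext1_snd {Y₁ Y Y₂ X : ModuleCat.{u} A} (u : Y₁ ⟶ Y) (v : Y ⟶ Y₂) (huv : IsSES u v)
    (h₁ : Ext1Vanish X Y₁) (h₂ : Ext1Vanish X Y₂) : Ext1Vanish X Y := by
  intro W a b hab
  obtain ⟨V, c, d, hsescd, hc, hd⟩ := reduce_step u v huv a b hab h₂
  obtain ⟨s₁, hs₁⟩ := h₁ (ModuleCat.of A V) c d hsescd
  refine ⟨ModuleCat.ofHom (V.subtype ∘ₗ (s₁.hom : X →ₗ[A] ModuleCat.of A V) : X →ₗ[A] W), ?_⟩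
  apply ModuleCat.hom_ext; apply LinearMap.ext; intro x
  show b (V.subtype (s₁ x)) = x
  rw [← hd (s₁ x)]
  exact ConcreteCategory.congr_hom hs₁ x

lemma section_of_sub {W X : ModuleCat.{u} A} (b : W ⟶ X) (V : Submodule A W)
    (hsurj : ∀ x : X, ∃ z ∈ V, b z = x)
    (hinj : ∀ z ∈ V, b z = (0 : X) → z = 0) :
    ∃ s : X ⟶ W, s ≫ b = 𝟙 X := by
  set f : V →ₗ[A] X := (b.hom : W →ₗ[A] X) ∘ₗ V.subtype with hf
  have hbij : Function.Bijective f := by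
    constructor
    · rw [← LinearMap.ker_eq_bot, LinearMap.ker_eq_bot']
      rintro ⟨z, hz⟩ h0
      exact Subtype.ext (hinj z hz h0)
    · intro x
      obtain ⟨z, hz, hzx⟩ := hsurj x
      exact ⟨⟨z, hz⟩, hzx⟩
  set e := LinearEquiv.ofBijective f hbij
  refine ⟨ModuleCat.ofHom (V.subtype ∘ₗ (e.symm : X →ₗ[A] V)), ?_⟩
  apply ModuleCat.hom_ext; apply LinearMap.ext; intro x
  show b ((V.subtype) (e.symm x)) = x
  exact e.apply_symm_apply x

lemma ext1_fst {X₁ X X₂ Y : ModuleCat.{u} A} (u : X₁ ⟶ X) (v : X ⟶ X₂) (huv : IsSES u v)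
    (h₁ : Ext1Vanish X₁ Y) (h₂ : Ext1Vanish X₂ Y) : Ext1Vanish X Y := by
  intro W a b hab
  have hba : ∀ y : Y, b (a y) = 0 := fun y =>
    show a y ∈ LinearMap.ker (b.hom : W →ₗ[A] X) from hab.exact ▸ ⟨y, rfl⟩
  have hvu : ∀ x₁ : X₁, v (u x₁) = 0 := fun x₁ =>
    show u x₁ ∈ LinearMap.ker (v.hom : X →ₗ[A] X₂) from huv.exact ▸ ⟨x₁, rfl⟩
  -- Step 1: pull back along u
  set V : Submodule A W := LinearMap.ker ((v.hom : X →ₗ[A] X₂) ∘ₗ (b.hom : W →ₗ[A] X)) with hV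
  set e₁ := LinearEquiv.ofInjective (u.hom : X₁ →ₗ[A] X) huv.inj with he₁
  have hbmem : ∀ w : V, b (w : W) ∈ LinearMap.range (u.hom : X₁ →ₗ[A] X) := by
    rintro ⟨w, hw⟩
    rw [huv.exact]
    exact hw
  set b' : ModuleCat.of A V ⟶ X₁ := ModuleCat.ofHom
    ((e₁.symm : LinearMap.range (u.hom : X₁ →ₗ[A] X) →ₗ[A] X₁) ∘ₗ
      (LinearMap.codRestrict (LinearMap.range (u.hom : X₁ →ₗ[A] X))
        ((b.hom : W →ₗ[A] X) ∘ₗ V.subtype) hbmem)) with hb'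
  have hb'app : ∀ (w : V) (x₁ : X₁), b (w : W) = u x₁ → b' w = x₁ := by
    intro w x₁ hw
    apply e₁.injective
    have k1 : e₁ (b' w) = ⟨b (w : W), hbmem w⟩ :=
      e₁.apply_symm_apply ⟨b (w : W), hbmem w⟩
    rw [k1]
    exact Subtype.ext (by show b (w : W) = ↑(e₁ x₁); rw [hw, he₁, LinearEquiv.ofInjective_apply])
  have hamem : ∀ y : Y, a y ∈ V := fun y => by
    show v (b (a y)) = 0
    rw [hba y, map_zero]
  set a' : Y ⟶ ModuleCat.of A V := ModuleCat.ofHom (LinearMap.codRestrict V (a.hom : Y →ₗ[A] W) hamem) with ha'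
  have hses1 : IsSES a' b' := by
    refine ⟨?_, ?_, ?_⟩
    · intro y₁ y₂ h
      exact hab.inj (Subtype.ext_iff.mp h)
    · intro x₁
      obtain ⟨w, hw⟩ := hab.surj (u x₁)
      have hwV : w ∈ V := by show v (b w) = 0; rw [hw]; exact hvu x₁
      exact ⟨⟨w, hwV⟩, hb'app ⟨w, hwV⟩ x₁ hw⟩
    · apply le_antisymm
      · rintro _ ⟨y, rfl⟩
        show b' (a' y) = 0
        have : b (V.subtype (a' y)) = u 0 := by rw [map_zero]; exact hba y
        exact hb'app _ 0 this
      · rintro ⟨w, hwV⟩ hk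
        have hk' : b' ⟨w, hwV⟩ = 0 := hk
        have hbw : b w = 0 := by
          have h2 : b w ∈ LinearMap.range (u.hom : X₁ →ₗ[A] X) := hbmem ⟨w, hwV⟩
          obtain ⟨x₁, hx₁⟩ := h2
          have := hb'app ⟨w, hwV⟩ x₁ hx₁.symm
          rw [hk'] at this
          rw [← hx₁, ← this, map_zero]
        obtain ⟨y, hy⟩ : w ∈ LinearMap.range (a.hom : Y →ₗ[A] W) := hab.exact ▸ hbw
        exact ⟨y, Subtype.ext hy⟩
  obtain ⟨s₁, hs₁⟩ := h₁ (ModuleCat.of A V) a' b' hses1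
  set σ : X₁ →ₗ[A] W := V.subtype ∘ₗ (s₁.hom : X₁ →ₗ[A] ModuleCat.of A V) with hσ
  have hbσ : ∀ x₁ : X₁, b (σ x₁) = u x₁ := by
    intro x₁
    have h1 : b' (s₁ x₁) = x₁ := ConcreteCategory.congr_hom hs₁ x₁
    have h2 : e₁ (b' (s₁ x₁)) = ⟨b (V.subtype (s₁ x₁)), hbmem _⟩ :=
      e₁.apply_symm_apply ⟨b (V.subtype (s₁ x₁)), hbmem _⟩
    rw [h1] at h2
    have h3 : (u.hom : X₁ →ₗ[A] X) x₁ = ↑(e₁ x₁) := by rw [he₁, LinearEquiv.ofInjective_apply]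
    have h4 := congrArg Subtype.val h2
    exact ((h3.trans h4).symm : b (V.subtype (s₁ x₁)) = u x₁)
  -- Step 2: quotient by range σ
  set N : Submodule A W := LinearMap.range σ with hN
  set Wb := ModuleCat.of A (W ⧸ N) with hWb
  set q : W →ₗ[A] Wb := N.mkQ with hq
  have hNk : N ≤ LinearMap.ker ((v.hom : X →ₗ[A] X₂) ∘ₗ (b.hom : W →ₗ[A] X)) := by
    rintro _ ⟨x₁, rfl⟩
    show v (b (σ x₁)) = 0
    rw [hbσ x₁]
    exact hvu x₁
  set b2 : Wb ⟶ X₂ := ModuleCat.ofHom (N.liftQ ((v.hom : X →ₗ[A] X₂) ∘ₗ (b.hom : W →ₗ[A] X)) hNk) with hb2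
  set abar : Y ⟶ Wb := ModuleCat.ofHom (q ∘ₗ (a.hom : Y →ₗ[A] W) : Y →ₗ[A] Wb) with habar
  have hses2 : IsSES abar b2 := by
    refine ⟨?_, ?_, ?_⟩
    · have h0 : ∀ y : Y, abar y = 0 → y = 0 := by
        intro y hy
        obtain ⟨x₁, hx₁⟩ := (Submodule.Quotient.mk_eq_zero N).mp hy
        have : u x₁ = 0 := by rw [← hbσ x₁, hx₁]; exact hba y
        have hx0 : x₁ = 0 := huv.inj (by rw [this, map_zero])
        apply hab.inj
        rw [← hx₁, hx0, map_zero, map_zero]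
      exact (injective_iff_map_eq_zero (abar.hom : Y →ₗ[A] Wb)).mpr h0
    · intro x₂
      obtain ⟨x, hx⟩ := huv.surj x₂
      obtain ⟨w, hw⟩ := hab.surj x
      exact ⟨q w, by show v (b w) = x₂; rw [hw, hx]⟩
    · apply le_antisymm
      · rintro _ ⟨y, rfl⟩
        show v (b (a y)) = 0
        rw [hba y, map_zero]
      · rintro t ht
        obtain ⟨w, rfl⟩ := Submodule.mkQ_surjective N t
        have hw : v (b w) = 0 := ht
        obtain ⟨x₁, hx₁⟩ : b w ∈ LinearMap.range (u.hom : X₁ →ₗ[A] X) := huv.exact ▸ hw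
        have hwσ : b (w - σ x₁) = 0 := by
          rw [map_sub, hbσ x₁, hx₁, sub_self]
        obtain ⟨y, hy⟩ : w - σ x₁ ∈ LinearMap.range (a.hom : Y →ₗ[A] W) := hab.exact ▸ hwσ
        refine ⟨y, ?_⟩
        show q (a y) = q w
        rw [hy, map_sub]
        have : q (σ x₁) = 0 := (Submodule.Quotient.mk_eq_zero N).mpr ⟨x₁, rfl⟩
        rw [this, sub_zero]
  obtain ⟨s₂, hs₂⟩ := h₂ Wb abar b2 hses2
  have hs₂' : ∀ x₂ : X₂, b2 (s₂ x₂) = x₂ := fun x₂ => ConcreteCategory.congr_hom hs₂ x₂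
  -- Step 3: final submodule and section
  apply section_of_sub b
    (LinearMap.ker (q - (s₂.hom : X₂ →ₗ[A] Wb) ∘ₗ (v.hom : X →ₗ[A] X₂) ∘ₗ (b.hom : W →ₗ[A] X)))
  · intro x
    obtain ⟨w₀, hw₀⟩ := hab.surj x
    have h3 : b2 (q w₀ - s₂ (v x)) = 0 := by
      rw [map_sub, hs₂' (v x)]
      show v (b w₀) - v x = 0
      rw [hw₀, sub_self]
    obtain ⟨y, hy⟩ : q w₀ - s₂ (v x) ∈ LinearMap.range (abar.hom : Y →ₗ[A] Wb) :=
      hses2.exact ▸ h3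
    refine ⟨w₀ - a y, ?_, ?_⟩
    · show q (w₀ - a y) - s₂ (v (b (w₀ - a y))) = 0
      rw [map_sub, map_sub, hba y, sub_zero, hw₀]
      have : q (a y) = q w₀ - s₂ (v x) := hy
      rw [this]
      abel
    · rw [map_sub, hba y, hw₀, sub_zero]
  · intro z hz hbz
    have hqz : q z = 0 := by
      have h4 : q z - s₂ (v (b z)) = 0 := hz
      rw [hbz, map_zero, map_zero, sub_zero] at h4
      exact h4
    obtain ⟨x₁, hx₁⟩ := (Submodule.Quotient.mk_eq_zero N).mp hqz
    have : u x₁ = 0 := by rw [← hbσ x₁, hx₁, hbz]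
    have hx0 : x₁ = 0 := huv.inj (by rw [this, map_zero])
    rw [← hx₁, hx0, map_zero]

lemma ext1_self (Y : ModuleCat.{u} A) : Ext1Vanish (ModuleCat.of A A) Y := by
  intro W a b hab
  obtain ⟨w₀, hw₀⟩ := hab.surj (show ↑(ModuleCat.of A A) from (1 : A))
  refine ⟨ModuleCat.ofHom (LinearMap.toSpanSingleton A W w₀ : _ →ₗ[A] _), ?_⟩
  apply ModuleCat.hom_ext; apply LinearMap.ext; intro x
  show b (x • w₀) = x
  rw [map_smul, hw₀]
  exact mul_one (M := A) x

def insMap (M : ModuleCat.{u} A) (n : ℕ) :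
    ModuleCat.of A (Fin n → M) ⟶ ModuleCat.of A (Fin (n+1) → M) := ModuleCat.ofHom {
  toFun f := Fin.snoc f 0
  map_add' f g := by
    funext k
    refine Fin.lastCases ?_ (fun j => ?_) k
    · show _ = (Fin.snoc f 0 : Fin (n+1) → M) (Fin.last n) + (Fin.snoc g 0 : Fin (n+1) → M) (Fin.last n)
      simp
    · show (Fin.snoc (f + g) 0 : Fin (n+1) → M) (Fin.castSucc j)
        = (Fin.snoc f 0 : Fin (n+1) → M) (Fin.castSucc j)
          + (Fin.snoc g 0 : Fin (n+1) → M) (Fin.castSucc j)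
      rw [Fin.snoc_castSucc, Fin.snoc_castSucc, Fin.snoc_castSucc]
      rfl
  map_smul' c f := by
    funext k
    refine Fin.lastCases ?_ (fun j => ?_) k
    · show _ = c • (Fin.snoc f 0 : Fin (n+1) → M) (Fin.last n)
      simp
    · show (Fin.snoc (c • f) 0 : Fin (n+1) → M) (Fin.castSucc j)
        = c • (Fin.snoc f 0 : Fin (n+1) → M) (Fin.castSucc j)
      rw [Fin.snoc_castSucc, Fin.snoc_castSucc]
      rfl }

def evMap (M : ModuleCat.{u} A) (n : ℕ) :
    ModuleCat.of A (Fin (n+1) → M) ⟶ M :=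
  ModuleCat.ofHom (LinearMap.proj (Fin.last n) : (Fin (n+1) → M) →ₗ[A] M)

lemma ses_snoc (M : ModuleCat.{u} A) (n : ℕ) : IsSES (insMap M n) (evMap M n) := by
  refine ⟨?_, ?_, ?_⟩
  · intro f g h
    funext j
    have h2 : (Fin.snoc f 0 : Fin (n+1) → M) (Fin.castSucc j)
        = (Fin.snoc g 0 : Fin (n+1) → M) (Fin.castSucc j) :=
      congrFun (show (Fin.snoc f 0 : Fin (n+1) → M) = Fin.snoc g 0 from h) (Fin.castSucc j)
    simpa using h2
  · intro m
    exact ⟨fun _ => m, rfl⟩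
  · apply le_antisymm
    · rintro _ ⟨f, rfl⟩
      show (Fin.snoc f 0 : Fin (n+1) → M) (Fin.last n) = 0
      simp
    · intro g hg
      have hg' : g (Fin.last n) = 0 := hg
      refine ⟨fun j => g (Fin.castSucc j), ?_⟩
      show (Fin.snoc (fun j => g (Fin.castSucc j)) 0 : Fin (n+1) → M) = g
      funext k
      refine Fin.lastCases ?_ (fun j => ?_) k
      · simp [hg']
      · simp

lemma ext1_pi_fst {M Y : ModuleCat.{u} A} (h : Ext1Vanish M Y) (n : ℕ) :
    Ext1Vanish (ModuleCat.of A (Fin n → M)) Y := by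
  induction n with
  | zero =>
    intro W a b hab
    haveI : Subsingleton (↑(ModuleCat.of A (Fin 0 → M))) :=
      ⟨fun f g => funext fun j => j.elim0⟩
    refine ⟨0, ?_⟩
    apply ModuleCat.hom_ext; apply LinearMap.ext; intro f
    exact Subsingleton.elim _ _
  | succ n ih => exact ext1_fst (insMap M n) (evMap M n) (ses_snoc M n) ih h

lemma ext1_pi_snd {M X : ModuleCat.{u} A} (h : Ext1Vanish X M) (n : ℕ) :
    Ext1Vanish X (ModuleCat.of A (Fin n → M)) := by
  induction n with
  | zero =>
    intro W a b hab
    haveI : Subsingleton (↑(ModuleCat.of A (Fin 0 → M))) :=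
      ⟨fun f g => funext fun j => j.elim0⟩
    have hinj : Function.Injective (b.hom : W →ₗ[A] X) := by
      rw [← LinearMap.ker_eq_bot, ← hab.exact, eq_bot_iff]
      rintro _ ⟨f, rfl⟩
      have hf : f = 0 := Subsingleton.elim _ _
      rw [hf, map_zero]
      exact Submodule.zero_mem ⊥
    set e := LinearEquiv.ofBijective (b.hom : W →ₗ[A] X) ⟨hinj, hab.surj⟩
    exact ⟨ModuleCat.ofHom (e.symm : X →ₗ[A] W), ModuleCat.hom_ext (LinearMap.ext fun x => e.apply_symm_apply x)⟩
  | succ n ih => exact ext1_snd (insMap M n) (evMap M n) (ses_snoc M n) ih h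

lemma ses_biprod (E M : ModuleCat.{u} A) :
    IsSES (biprod.inl : E ⟶ E ⊞ M) (biprod.snd : E ⊞ M ⟶ M) := by
  have hfst : ∀ x : E, (biprod.fst : E ⊞ M ⟶ E) ((biprod.inl : E ⟶ E ⊞ M) x) = x := fun x =>
    ConcreteCategory.congr_hom (biprod.inl_fst (X := E) (Y := M)) x
  have hsnd_inr : ∀ m : M, (biprod.snd : E ⊞ M ⟶ M) ((biprod.inr : M ⟶ E ⊞ M) m) = m :=
    fun m => ConcreteCategory.congr_hom (biprod.inr_snd (X := E) (Y := M)) m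
  have hsnd_inl : ∀ x : E, (biprod.snd : E ⊞ M ⟶ M) ((biprod.inl : E ⟶ E ⊞ M) x) = 0 :=
    fun x => ConcreteCategory.congr_hom (biprod.inl_snd (X := E) (Y := M)) x
  have htotal : ∀ t : ↑(E ⊞ M),
      (biprod.inl : E ⟶ E ⊞ M) ((biprod.fst : E ⊞ M ⟶ E) t) +
      (biprod.inr : M ⟶ E ⊞ M) ((biprod.snd : E ⊞ M ⟶ M) t) = t := fun t =>
    ConcreteCategory.congr_hom (biprod.total (X := E) (Y := M)) t
  refine ⟨?_, ?_, ?_⟩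
  · intro x y h
    rw [← hfst x, ← hfst y, h]
  · intro m
    exact ⟨(biprod.inr : M ⟶ E ⊞ M) m, hsnd_inr m⟩
  · apply le_antisymm
    · rintro _ ⟨x, rfl⟩
      exact hsnd_inl x
    · intro t ht
      have h0 : (biprod.snd : E ⊞ M ⟶ M) t = 0 := ht
      refine ⟨(biprod.fst : E ⊞ M ⟶ E) t, ?_⟩
      have h1 := htotal t
      rw [h0, map_zero, add_zero] at h1
      exact h1

lemma ext1_univ {M : ModuleCat.{u} A} {n : ℕ} {E : ModuleCat.{u} A}
    (i : ModuleCat.of A A ⟶ E) (p : E ⟶ ModuleCat.of A (Fin n → M)) (hses : IsSES i p)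
    (huniv : ∀ (E' : ModuleCat.{u} A) (i' : ModuleCat.of A A ⟶ E') (p' : E' ⟶ M),
      IsSES i' p' → ∃ (g : M ⟶ ModuleCat.of A (Fin n → M)) (h : E' ⟶ E),
        i' ≫ h = i ∧ h ≫ p = p' ≫ g)
    (hMMn : Ext1Vanish M (ModuleCat.of A (Fin n → M))) : Ext1Vanish M E := by
  intro W a b hab
  obtain ⟨V, c, d, hsescd, hc, hd⟩ := reduce_step i p hses a b hab hMMn
  obtain ⟨g, h, hih, hpg⟩ := huniv (ModuleCat.of A V) c d hsescd
  set h' : (V : Submodule A W) →ₗ[A] E := h.hom with hh'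
  set ψ : V →ₗ[A] W :=
    V.subtype - (a.hom : E →ₗ[A] W) ∘ₗ h' with hψ
  have hψc : ∀ x : ModuleCat.of A A, ψ (c x) = 0 := by
    intro x
    have h1 : h' (c x) = i x := ConcreteCategory.congr_hom hih x
    show V.subtype (c x) - a (h' (c x)) = 0
    rw [h1, hc x, sub_self]
  have hbψ : ∀ z, b (ψ z) = d z := by
    intro z
    show b (V.subtype z - a (h' z)) = d z
    have hba : b (a (h' z)) = 0 :=
      show a (h' z) ∈ LinearMap.ker (b.hom : W →ₗ[A] M) from hab.exact ▸ ⟨h' z, rfl⟩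
    rw [map_sub, hba, sub_zero, hd z]
  apply section_of_sub b (LinearMap.range ψ)
  · intro x
    obtain ⟨z, hz⟩ := hsescd.surj x
    exact ⟨ψ z, ⟨z, rfl⟩, by rw [hbψ z, hz]⟩
  · rintro _ ⟨z, rfl⟩ hbz
    rw [hbψ z] at hbz
    obtain ⟨x, hx⟩ : z ∈ LinearMap.range (c.hom : ModuleCat.of A A →ₗ[A] ModuleCat.of A V) :=
      hsescd.exact ▸ hbz
    rw [← hx, hψc x]


lemma pi_proj {P : Type u} [AddCommGroup P] [Module A P] (hP : Module.Projective A P) (n : ℕ) :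
    Module.Projective A (Fin n → P) := by
  induction n with
  | zero =>
    haveI : Subsingleton (Fin 0 → P) := ⟨fun f g => funext fun j => j.elim0⟩
    exact Module.Projective.of_basis (Module.Basis.empty _ : Module.Basis (Fin 0) A _)
  | succ n ih =>
    haveI := ih
    haveI := hP
    refine Module.Projective.of_equiv (M := (Fin n → P) × P) (σ := RingHom.id A)
      { toFun := fun x => Fin.snoc x.1 x.2
        invFun := fun f => (Fin.init f, f (Fin.last n))
        map_add' := fun x y => by
          funext k
          refine Fin.lastCases ?_ (fun j => ?_) k
          · simp
          · simp
        map_smul' := fun (c : A) x => by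
          funext k
          refine Fin.lastCases ?_ (fun j => ?_) k
          · simp
          · simp
        left_inv := fun x => by simp
        right_inv := fun f => Fin.snoc_init_self f }

lemma projdim_biprod {M E : ModuleCat.{u} A} {n : ℕ}
    (i : ModuleCat.of A A ⟶ E) (p : E ⟶ ModuleCat.of A (Fin n → M))
    (hses : IsSES i p) (hM2 : ProjDimLE1 M) : ProjDimLE1 (E ⊞ M) := by
  obtain ⟨P₁, P₀, j, π, hP₁, hP₀, hseq⟩ := hM2
  have hp₁ : Module.Projective A P₁ := (IsProjective.iff_projective (R := A) P₁).mpr hP₁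
  have hp₀ : Module.Projective A P₀ := (IsProjective.iff_projective (R := A) P₀).mpr hP₀
  set il : A →ₗ[A] E := (i : ModuleCat.of A A ⟶ E).hom with hil
  set pl : E →ₗ[A] (Fin n → M) := (p : E ⟶ ModuleCat.of A (Fin n → M)).hom with hpl
  have hinj : Function.Injective il := hses.inj
  have hpsurj : Function.Surjective pl := hses.surj
  have hexact : LinearMap.range il = LinearMap.ker pl := hses.exact
  set jn : (Fin n → P₁) →ₗ[A] (Fin n → P₀) := (j.hom : P₁ →ₗ[A] P₀).compLeft (Fin n) with hjn
  set πn : (Fin n → P₀) →ₗ[A] (Fin n → M) := (π.hom : P₀ →ₗ[A] M).compLeft (Fin n) with hπn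
  have hπj : ∀ q : P₁, π (j q) = 0 := fun q =>
    show j q ∈ LinearMap.ker (π.hom : P₀ →ₗ[A] M) from hseq.exact ▸ ⟨q, rfl⟩
  haveI hpp : Module.Projective A (Fin n → P₀) := pi_proj hp₀ n
  obtain ⟨L, hL⟩ := Module.projective_lifting_property
    pl (πn : (Fin n → P₀) →ₗ[A] (Fin n → M)) hses.surj
  have hLapp : ∀ f, pl (L f) = πn f := fun f => DFunLike.congr_fun hL f
  have hmem : ∀ g : Fin n → P₁, L (jn g) ∈ LinearMap.range il := by
    intro g
    rw [hexact, LinearMap.mem_ker]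
    show pl (L (jn g)) = 0
    rw [hLapp (jn g)]
    funext k
    exact hπj (g k)
  set ei := LinearEquiv.ofInjective il hinj with hei
  set lam : (Fin n → P₁) →ₗ[A] A :=
    (ei.symm : _ →ₗ[A] _) ∘ₗ LinearMap.codRestrict _ (L ∘ₗ jn) hmem with hlam
  have hilam : ∀ g, il (lam g) = L (jn g) := by
    intro g
    have k1 : ei (lam g) = ⟨L (jn g), hmem g⟩ := ei.apply_symm_apply ⟨L (jn g), hmem g⟩
    have k2 := congrArg Subtype.val k1
    have k3 : il (lam g) = ↑(ei (lam g)) := by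
      rw [hei, LinearEquiv.ofInjective_apply]
    rw [k3, k2]
  -- the middle object and maps
  set φ : ((A × (Fin n → P₀)) × P₀) →ₗ[A] (E × M) :=
    LinearMap.prod
      ((il ∘ₗ LinearMap.fst A A (Fin n → P₀)
        + L ∘ₗ LinearMap.snd A A (Fin n → P₀)) ∘ₗ LinearMap.fst A (A × (Fin n → P₀)) P₀)
      ((π.hom : P₀ →ₗ[A] M) ∘ₗ LinearMap.snd A (A × (Fin n → P₀)) P₀) with hφ
  have hφapp : ∀ z : (A × (Fin n → P₀)) × P₀,
      φ z = (il z.1.1 + L z.1.2, π z.2) := fun z => rfl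
  set χ : ((Fin n → P₁) × P₁) →ₗ[A] ((A × (Fin n → P₀)) × P₀) :=
    LinearMap.prod
      (LinearMap.prod (-(lam ∘ₗ LinearMap.fst A (Fin n → P₁) P₁))
        (jn ∘ₗ LinearMap.fst A (Fin n → P₁) P₁))
      ((j.hom : P₁ →ₗ[A] P₀) ∘ₗ LinearMap.snd A (Fin n → P₁) P₁) with hχ
  have hχapp : ∀ w : (Fin n → P₁) × P₁,
      χ w = ((-(lam w.1), jn w.1), j w.2) := fun w => rfl
  set eEM := ModuleCat.biprodIsoProd E M with heEM
  have hEMhi : ∀ s : ↑(ModuleCat.of A (E × M)), eEM.hom (eEM.inv s) = s := fun s =>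
    ConcreteCategory.congr_hom (eEM.inv_hom_id) s
  have hEMih : ∀ t : ↑(E ⊞ M), eEM.inv (eEM.hom t) = t := fun t =>
    ConcreteCategory.congr_hom (eEM.hom_inv_id) t
  set pQ : ModuleCat.of A ((A × (Fin n → P₀)) × P₀) ⟶ E ⊞ M :=
    (ModuleCat.ofHom φ : ModuleCat.of A ((A × (Fin n → P₀)) × P₀) ⟶ ModuleCat.of A (E × M)) ≫ eEM.inv
    with hpQ
  set jQ : ModuleCat.of A ((Fin n → P₁) × P₁) ⟶ ModuleCat.of A ((A × (Fin n → P₀)) × P₀) :=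
    ModuleCat.ofHom (χ : _ →ₗ[A] _) with hjQ
  have hpQapp : ∀ z, pQ z = eEM.inv (φ z) := fun z => rfl
  -- φ (χ w) = 0
  have hφχ : ∀ w, φ (χ w) = 0 := by
    intro w
    rw [hχapp, hφapp]
    show (il (-(lam w.1)) + L (jn w.1), π (j w.2)) = 0
    rw [map_neg, hilam w.1, hπj w.2, neg_add_cancel]
    rfl
  have hjninj : Function.Injective jn := by
    intro g g' hgg
    funext k
    exact hseq.inj (congrFun hgg k)
  refine ⟨ModuleCat.of A ((Fin n → P₁) × P₁), ModuleCat.of A ((A × (Fin n → P₀)) × P₀),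
    jQ, pQ, ?_, ?_, ?_, ?_, ?_⟩
  · -- projective K
    haveI h1 : Module.Projective A (Fin n → P₁) := pi_proj hp₁ n
    haveI h2 : Module.Projective A ↑P₁ := hp₁
    exact (IsProjective.iff_projective _).mp inferInstance
  · -- projective Q
    haveI h1 : Module.Projective A (Fin n → P₀) := hpp
    haveI h2 : Module.Projective A ↑P₀ := hp₀
    exact (IsProjective.iff_projective _).mp inferInstance
  · -- injective jQ
    intro w w' hww
    have hww' : ((-(lam w.1), jn w.1), j w.2) = ((-(lam w'.1), jn w'.1), j w'.2) := by
      rw [← hχapp, ← hχapp]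
      exact hww
    have e2 : jn w.1 = jn w'.1 := congrArg (fun t => t.1.2) hww'
    have e3 : j w.2 = j w'.2 := congrArg (fun t => t.2) hww'
    exact Prod.ext (hjninj e2) (hseq.inj e3)
  · -- surjective pQ
    intro t
    set x := eEM.hom t with hx
    obtain ⟨q0, hq0⟩ := hseq.surj (x.2 : M)
    have hsur : ∀ m : M, ∃ q : P₀, π q = m := hseq.surj
    set f : Fin n → P₀ := fun k => (hsur ((pl (x.1)) k)).choose with hff
    have hf : πn f = pl (x.1) := by
      funext k
      exact (hsur ((pl (x.1)) k)).choose_spec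
    have hker : x.1 - L f ∈ LinearMap.range il := by
      rw [hexact, LinearMap.mem_ker]
      show pl (x.1 - L f) = 0
      rw [map_sub, hLapp, hf, sub_self]
    obtain ⟨a0, ha0⟩ := hker
    refine ⟨((a0, f), q0), ?_⟩
    rw [hpQapp, hφapp]
    show eEM.inv (il a0 + L f, π q0) = t
    rw [ha0, hq0]
    have : (x.1 - L f + L f, (x.2 : M)) = x := by
      rw [sub_add_cancel]
    rw [this, hx]
    exact hEMih t
  · -- exactness
    apply le_antisymm
    · rintro _ ⟨w, rfl⟩
      show eEM.inv (φ (χ w)) = 0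
      rw [hφχ w, map_zero]
    · intro z hz
      have hz0 : pQ z = 0 := hz
      have hφz : φ z = 0 := by
        have h1 : eEM.hom (pQ z) = φ z := by
          rw [hpQapp]
          exact hEMhi (φ z)
        rw [← h1, hz0, map_zero]
      have h2 : (il z.1.1 + L z.1.2, π z.2) = (0 : E × M) := by
        rw [← hφapp z, hφz]
      have hz1a : il z.1.1 + L z.1.2 = 0 := congrArg Prod.fst h2
      have hz1b : π z.2 = 0 := congrArg Prod.snd h2
      obtain ⟨q₁, hq₁⟩ : z.2 ∈ LinearMap.range (j.hom : P₁ →ₗ[A] P₀) :=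
        hseq.exact ▸ LinearMap.mem_ker.mpr hz1b
      have hpi : ∀ a0 : A, pl (il a0) = 0 := fun a0 =>
        show il a0 ∈ LinearMap.ker pl from
          hexact ▸ ⟨a0, rfl⟩
      have hπnz : πn z.1.2 = 0 := by
        rw [← hLapp]
        have hLz : L z.1.2 = -(il z.1.1) := eq_neg_of_add_eq_zero_right hz1a
        rw [hLz, map_neg, hpi, neg_zero]
      have hk : ∀ k, ∃ w : P₁, j w = z.1.2 k := by
        intro k
        have h7 : π (z.1.2 k) = 0 := congrFun hπnz k
        have h8 : z.1.2 k ∈ LinearMap.range (j.hom : P₁ →ₗ[A] P₀) :=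
          hseq.exact ▸ LinearMap.mem_ker.mpr h7
        exact h8
      set g : Fin n → P₁ := fun k => (hk k).choose with hgdef
      have hg : jn g = z.1.2 := funext fun k => (hk k).choose_spec
      have hz11 : -(lam g) = z.1.1 := by
        apply hinj
        show il (-(lam g)) = il z.1.1
        rw [map_neg, hilam g, hg]
        rw [eq_neg_of_add_eq_zero_left hz1a]
      refine ⟨(g, q₁), ?_⟩
      show χ (g, q₁) = z
      rw [hχapp]
      show ((-(lam g), jn g), j q₁) = z
      rw [hz11, hg, hq₁]

end Bongartz

section Statements

variable (K : Type u) [Field K] (A : Type u) [Ring A] [Algebra K A] [FiniteDimensional K A]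

/-- Bongartz completion: let `M` be a partial tilting module and
`0 → A → E → Mⁿ → 0` a universal extension (every extension of `M` by `A` is obtained from it
by pullback along a map `M → Mⁿ`, i.e. admits a morphism of extensions to it; this is the
universal extension built from a basis of `Ext¹(M, A)`). Then `T = E ⊕ M` is a tilting module:
`Ext¹(T, T) = 0`, `proj.dim T ≤ 1`, and there is a short exact sequence `0 → A → T⁰ → T¹ → 0`
with `T⁰, T¹ ∈ add T`. -/
theorem bongartz_completion (M : ModuleCat.{u} A) [Module.Finite A M]
    (hM1 : Ext1Vanish M M) (hM2 : ProjDimLE1 M)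
    (n : ℕ) (E : ModuleCat.{u} A) [Module.Finite A E]
    (i : ModuleCat.of A A ⟶ E) (p : E ⟶ ModuleCat.of A (Fin n → M))
    (hses : IsSES i p)
    (huniv : ∀ (E' : ModuleCat.{u} A) (i' : ModuleCat.of A A ⟶ E') (p' : E' ⟶ M),
      IsSES i' p' → ∃ (g : M ⟶ ModuleCat.of A (Fin n → M)) (h : E' ⟶ E),
        i' ≫ h = i ∧ h ≫ p = p' ≫ g) :
    Ext1Vanish (E ⊞ M) (E ⊞ M) ∧ ProjDimLE1 (E ⊞ M) ∧
      ∃ (T0 T1 : ModuleCat.{u} A) (j : ModuleCat.of A A ⟶ T0) (q : T0 ⟶ T1),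
        IsSES j q ∧ AddClass (E ⊞ M) T0 ∧ AddClass (E ⊞ M) T1 := by
  classical
  have hMMn : Ext1Vanish M (ModuleCat.of A (Fin n → M)) := Bongartz.ext1_pi_snd hM1 n
  have hME : Ext1Vanish M E := Bongartz.ext1_univ i p hses huniv hMMn
  have hEY : ∀ Y : ModuleCat.{u} A, Ext1Vanish M Y → Ext1Vanish E Y := fun Y h =>
    Bongartz.ext1_fst i p hses (Bongartz.ext1_self Y) (Bongartz.ext1_pi_fst h n)
  have hEE : Ext1Vanish E E := hEY E hME
  have hEM : Ext1Vanish E M := hEY M hM1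
  have hT : ∀ X : ModuleCat.{u} A,
      Ext1Vanish X E → Ext1Vanish X M → Ext1Vanish X (E ⊞ M) := fun X hE hM =>
    Bongartz.ext1_snd (Limits.biprod.inl : E ⟶ E ⊞ M) (Limits.biprod.snd : E ⊞ M ⟶ M)
      (Bongartz.ses_biprod E M) hE hM
  set T : ModuleCat.{u} A := E ⊞ M with hTdef
  set inlT : E →ₗ[A] T := (Limits.biprod.inl : E ⟶ T).hom with hinlT
  set fstT : T →ₗ[A] E := (Limits.biprod.fst : T ⟶ E).hom with hfstT
  set inrT : M →ₗ[A] T := (Limits.biprod.inr : M ⟶ T).hom with hinrT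
  set sndT : T →ₗ[A] M := (Limits.biprod.snd : T ⟶ M).hom with hsndT
  refine ⟨?_, ?_, E, ModuleCat.of A (Fin n → M), i, p, hses, ?_, ?_⟩
  · exact Bongartz.ext1_fst (Limits.biprod.inl : E ⟶ E ⊞ M)
      (Limits.biprod.snd : E ⊞ M ⟶ M) (Bongartz.ses_biprod E M)
      (hT E hEE hEM) (hT M hME hM1)
  · exact Bongartz.projdim_biprod i p hses hM2
  · -- AddClass (E ⊞ M) E
    refine ⟨1, ModuleCat.ofHom (LinearMap.pi (fun _ : Fin 1 => inlT) : E →ₗ[A] (Fin 1 → T)),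
      ModuleCat.ofHom (fstT ∘ₗ (LinearMap.proj (0 : Fin 1) : (Fin 1 → T) →ₗ[A] T) : (Fin 1 → T) →ₗ[A] E), ?_⟩
    apply ModuleCat.hom_ext; apply LinearMap.ext; intro x
    show fstT (inlT x) = x
    exact ConcreteCategory.congr_hom (Limits.biprod.inl_fst (X := E) (Y := M)) x
  · -- AddClass (E ⊞ M) (Mⁿ)
    refine ⟨n, ModuleCat.ofHom (inrT.compLeft (Fin n) : (Fin n → M) →ₗ[A] (Fin n → T)),
      ModuleCat.ofHom (sndT.compLeft (Fin n) : (Fin n → T) →ₗ[A] (Fin n → M)), ?_⟩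
    apply ModuleCat.hom_ext; apply LinearMap.ext; intro f
    funext k
    show sndT (inrT (f k)) = f k
    exact ConcreteCategory.congr_hom (Limits.biprod.inr_snd (X := E) (Y := M)) (f k)
end Statements
end
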